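/- arXiv:1904.12737 — 8 statements merged into one kernel-verified Lean document; each statement's English description precedes it below -/
import Mathlib

section
/- Let n ≥ 2 be a natural number, let s be a natural number with 0 ≤ s ≤ n−2 (so that β := (s+1)/n satisfies 0 < β < 1), let a be a complex number and let x > 0 be a real number. Then the Riemann–Liouville fractional integral of order 1−β of J_s(·, a) at x equals the exponential: (1/Γ(1−β)) · ∫_0^x (x−t)^{−β} · J_s(t, a) dt = e^{a x}. -/
open MeasureTheory Set

lemma cpow_eq_ofReal_on_Ioc {x u v : ℝ} (hx : 0 < x) {t : ℝ} (ht : t ∈ Ioc 0 x) :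
    (t : ℂ) ^ ((u : ℂ) - 1) * ((x : ℂ) - (t : ℂ)) ^ ((v : ℂ) - 1)
      = ((t ^ (u - 1) : ℝ) : ℂ) * (((x - t) ^ (v - 1) : ℝ) : ℂ) := by
  rw [Complex.ofReal_cpow ht.1.le, Complex.ofReal_cpow (by linarith [ht.2] : (0:ℝ) ≤ x - t)]
  push_cast
  ring

lemma aux_integrable {x u v : ℝ} (hx : 0 < x) (hu : 0 < u) (hv : 0 < v) :
    IntegrableOn (fun t : ℝ => ((t ^ (u - 1) : ℝ) : ℂ) * (((x - t) ^ (v - 1) : ℝ) : ℂ))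
      (Ioc 0 x) := by
  have hg : IntervalIntegrable
      (fun y : ℝ => (y : ℂ) ^ ((u : ℂ) - 1) * (1 - (y : ℂ)) ^ ((v : ℂ) - 1)) volume 0 1 :=
    Complex.betaIntegral_convergent (by simpa using hu) (by simpa using hv)
  have h1 := hg.comp_mul_right (c := x⁻¹) enorm_ne_top enorm_ne_top
  rw [zero_div, one_div, inv_inv] at h1
  have h2 := h1.const_mul ((x : ℂ) ^ ((u : ℂ) - 1) * (x : ℂ) ^ ((v : ℂ) - 1))
  have h3 : IntegrableOn
      (fun y : ℝ => (x : ℂ) ^ ((u : ℂ) - 1) * (x : ℂ) ^ ((v : ℂ) - 1) *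
        ((↑(y * x⁻¹) : ℂ) ^ ((u : ℂ) - 1) * (1 - (↑(y * x⁻¹) : ℂ)) ^ ((v : ℂ) - 1)))
      (Ioc 0 x) := h2.1
  refine (h3.congr_fun (fun t ht => ?_) measurableSet_Ioc)
  rw [← cpow_eq_ofReal_on_Ioc hx ht]
  have hx' : (x : ℂ) ≠ 0 := by exact_mod_cast hx.ne'
  have h4 : (t : ℂ) = (x : ℂ) * (↑(t * x⁻¹) : ℂ) := by
    push_cast; field_simp
  have h5 : (x : ℂ) - (t : ℂ) = (x : ℂ) * (↑(1 - t * x⁻¹) : ℂ) := by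
    push_cast; field_simp
  have hle : t * x⁻¹ ≤ 1 := by rw [← div_eq_mul_inv]; exact (div_le_one hx).2 ht.2
  rw [h5, h4]
  rw [Complex.mul_cpow_ofReal_nonneg hx.le (mul_nonneg ht.1.le (inv_nonneg.2 hx.le)),
    Complex.mul_cpow_ofReal_nonneg hx.le (by linarith : (0:ℝ) ≤ 1 - t * x⁻¹)]
  push_cast
  ring

lemma aux_value {x u v : ℝ} (hx : 0 < x) (hu : 0 < u) (hv : 0 < v) :
    ∫ t in Ioc 0 x, ((t ^ (u - 1) : ℝ) : ℂ) * (((x - t) ^ (v - 1) : ℝ) : ℂ)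
      = ((x ^ (u + v - 1) : ℝ) : ℂ) * ((Real.Gamma u : ℝ) : ℂ) * ((Real.Gamma v : ℝ) : ℂ) /
        ((Real.Gamma (u + v) : ℝ) : ℂ) := by
  have h0 : ∫ t in Ioc 0 x, ((t ^ (u - 1) : ℝ) : ℂ) * (((x - t) ^ (v - 1) : ℝ) : ℂ)
      = ∫ t in Ioc 0 x, (t : ℂ) ^ ((u : ℂ) - 1) * ((x : ℂ) - (t : ℂ)) ^ ((v : ℂ) - 1) :=
    (setIntegral_congr_fun measurableSet_Ioc fun t ht => (cpow_eq_ofReal_on_Ioc hx ht).symm)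
  rw [h0, ← intervalIntegral.integral_of_le hx.le, Complex.betaIntegral_scaled _ _ hx]
  have hG : Complex.Gamma ((u : ℂ) + (v : ℂ)) ≠ 0 := by
    rw [show ((u : ℂ) + (v : ℂ)) = ((u + v : ℝ) : ℂ) by push_cast; ring, Complex.Gamma_ofReal]
    exact_mod_cast (Real.Gamma_pos_of_pos (by linarith)).ne'
  have hB := Complex.Gamma_mul_Gamma_eq_betaIntegral
    (s := (u : ℂ)) (t := (v : ℂ)) (by simpa using hu) (by simpa using hv)
  have hBval : Complex.betaIntegral u v
      = Complex.Gamma u * Complex.Gamma v / Complex.Gamma ((u : ℂ) + (v : ℂ)) := by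
    rw [eq_div_iff hG, hB]; ring
  rw [hBval]
  rw [show (u : ℂ) + (v : ℂ) - 1 = ((u + v - 1 : ℝ) : ℂ) by push_cast; ring,
    ← Complex.ofReal_cpow hx.le,
    show (u : ℂ) + (v : ℂ) = ((u + v : ℝ) : ℂ) by push_cast; ring,
    Complex.Gamma_ofReal, Complex.Gamma_ofReal, Complex.Gamma_ofReal]
  ring

lemma main_general (B : ℝ) (hB0 : 0 < B) (hB1 : B < 1) (a : ℂ) (x : ℝ) (hx : 0 < x) :
    ((1 / Real.Gamma (1 - B) : ℝ) : ℂ) *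
      ∫ t in (0:ℝ)..x, (((x - t) ^ (-B) : ℝ) : ℂ) *
        (∑' k : ℕ, a ^ k * ((t ^ ((k:ℝ) + B - 1) : ℝ) : ℂ) / ((Real.Gamma ((k:ℝ) + B) : ℝ) : ℂ))
      = Complex.exp (a * x) := by
  have hv : 0 < 1 - B := by linarith
  have e1 : (1:ℝ) - B - 1 = -B := by ring
  set F : ℕ → ℝ → ℂ := fun k t =>
    (a ^ k / ((Real.Gamma ((k:ℝ) + B) : ℝ) : ℂ)) *
      (((t ^ ((k:ℝ) + B - 1) : ℝ) : ℂ) * (((x - t) ^ (-B) : ℝ) : ℂ)) with hF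
  have hGk : ∀ k : ℕ, (0:ℝ) < Real.Gamma ((k:ℝ) + B) := fun k =>
    Real.Gamma_pos_of_pos (by positivity)
  -- integrability
  have hI : ∀ k : ℕ, IntegrableOn
      (fun t : ℝ => ((t ^ ((k:ℝ) + B - 1) : ℝ) : ℂ) * (((x - t) ^ (-B) : ℝ) : ℂ)) (Set.Ioc 0 x) := by
    intro k
    have h := aux_integrable (x := x) (u := (k:ℝ) + B) (v := 1 - B) hx (by positivity) hv
    rwa [e1] at h
  have hFint : ∀ k : ℕ, Integrable (F k) (volume.restrict (Set.Ioc 0 x)) := fun k =>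
    (hI k).const_mul _
  -- value of each integral
  have hV : ∀ k : ℕ, ∫ t in Set.Ioc 0 x,
      ((t ^ ((k:ℝ) + B - 1) : ℝ) : ℂ) * (((x - t) ^ (-B) : ℝ) : ℂ)
      = ((x ^ (k:ℕ) * Real.Gamma ((k:ℝ) + B) * Real.Gamma (1 - B) / (k.factorial : ℝ) : ℝ) : ℂ) := by
    intro k
    have h := aux_value (x := x) (u := (k:ℝ) + B) (v := 1 - B) hx (by positivity) hv
    rw [e1, show (k:ℝ) + B + (1 - B) - 1 = ((k:ℕ):ℝ) by push_cast; ring,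
      show (k:ℝ) + B + (1 - B) = ((k:ℕ):ℝ) + 1 by push_cast; ring,
      Real.Gamma_nat_eq_factorial, Real.rpow_natCast] at h
    rw [h]
    push_cast
    ring
  have hreal : ∀ k : ℕ, ∫ t in Set.Ioc 0 x, (t ^ ((k:ℝ) + B - 1) * (x - t) ^ (-B))
      = x ^ (k:ℕ) * Real.Gamma ((k:ℝ) + B) * Real.Gamma (1 - B) / (k.factorial : ℝ) := by
    intro k
    apply Complex.ofReal_injective
    rw [← hV k]
    refine (integral_ofReal (𝕜 := ℂ)).symm.trans ?_
    exact setIntegral_congr_fun measurableSet_Ioc fun t _ => Complex.ofReal_mul _ _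
  -- norm integrals
  have hnorm : ∀ k : ℕ, (∫ t in Set.Ioc 0 x, ‖F k t‖)
      = Real.Gamma (1 - B) * ((‖a‖ * x) ^ (k:ℕ) / (k.factorial : ℝ)) := by
    intro k
    have : ∀ t ∈ Set.Ioc (0:ℝ) x, ‖F k t‖
        = (‖a‖ ^ k / Real.Gamma ((k:ℝ) + B)) * (t ^ ((k:ℝ) + B - 1) * (x - t) ^ (-B)) := by
      intro t ht
      have h1 : (0:ℝ) ≤ t ^ ((k:ℝ) + B - 1) := Real.rpow_nonneg ht.1.le _
      have h2 : (0:ℝ) ≤ (x - t) ^ (-B) := Real.rpow_nonneg (by linarith [ht.2]) _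
      rw [hF]
      simp only [norm_mul, norm_div, norm_pow, Complex.norm_real]
      rw [Real.norm_eq_abs, Real.norm_eq_abs, Real.norm_eq_abs,
        abs_of_pos (hGk k), abs_of_nonneg h1, abs_of_nonneg h2]
    rw [setIntegral_congr_fun measurableSet_Ioc this, MeasureTheory.integral_const_mul, hreal k]
    field_simp
    rw [mul_pow]
  have hsum : Summable fun k : ℕ => ∫ t in Set.Ioc 0 x, ‖F k t‖ := by
    simp_rw [hnorm]
    exact (Real.summable_pow_div_factorial (‖a‖ * x)).mul_left _
  -- pointwise tsum identity
  have hpt : ∀ t ∈ Set.Ioc (0:ℝ) x,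
      (((x - t) ^ (-B) : ℝ) : ℂ) *
        (∑' k : ℕ, a ^ k * ((t ^ ((k:ℝ) + B - 1) : ℝ) : ℂ) / ((Real.Gamma ((k:ℝ) + B) : ℝ) : ℂ))
      = ∑' k : ℕ, F k t := by
    intro t _
    rw [← tsum_mul_left]
    exact tsum_congr fun k => by rw [hF]; ring
  rw [intervalIntegral.integral_of_le hx.le,
    setIntegral_congr_fun measurableSet_Ioc hpt,
    ← integral_tsum_of_summable_integral_norm hFint hsum]
  have hVF : ∀ k : ℕ, ∫ t in Set.Ioc 0 x, F k t
      = ((Real.Gamma (1 - B) : ℝ) : ℂ) * ((a * x) ^ k / (k.factorial : ℂ)) := by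
    intro k
    simp only [hF]
    rw [MeasureTheory.integral_const_mul, hV k]
    have : ((Real.Gamma ((k:ℝ) + B) : ℝ) : ℂ) ≠ 0 := by exact_mod_cast (hGk k).ne'
    have hfac : ((k.factorial : ℕ) : ℂ) ≠ 0 := Nat.cast_ne_zero.2 k.factorial_ne_zero
    push_cast
    field_simp [this, hfac]
    rw [mul_pow]
    ring
  rw [tsum_congr hVF, tsum_mul_left]
  have hexp : (∑' k : ℕ, (a * x) ^ k / (k.factorial : ℂ)) = Complex.exp (a * x) := by
    rw [Complex.exp_eq_exp_ℂ, NormedSpace.exp_eq_tsum_div]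
  rw [hexp, ← mul_assoc, ← Complex.ofReal_mul, one_div,
    inv_mul_cancel₀ (Real.Gamma_pos_of_pos hv).ne', Complex.ofReal_one, one_mul]

/-- `J_s(x, a) = ∑_{k=0}^∞ a^k · x^{k + β − 1} / Γ(k + β)` with `β = (s+1)/n`. -/
noncomputable def Js (n s : ℕ) (x : ℝ) (a : ℂ) : ℂ :=
  ∑' k : ℕ, a ^ k * ((x ^ ((k : ℝ) + ((s : ℝ) + 1) / (n : ℝ) - 1) : ℝ) : ℂ) /
    ((Real.Gamma ((k : ℝ) + ((s : ℝ) + 1) / (n : ℝ)) : ℝ) : ℂ)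

theorem stmt_3 (n : ℕ) (hn : 2 ≤ n) (s : ℕ) (hs : s ≤ n - 2)
    (a : ℂ) (x : ℝ) (hx : 0 < x) :
    ((1 / Real.Gamma (1 - ((s : ℝ) + 1) / (n : ℝ)) : ℝ) : ℂ) *
      ∫ t in (0 : ℝ)..x,
        (((x - t) ^ (-(((s : ℝ) + 1) / (n : ℝ))) : ℝ) : ℂ) * Js n s t a =
    Complex.exp (a * x) := by
  have hn0 : (0:ℝ) < (n:ℝ) := by exact_mod_cast show 0 < n by omega
  have hB0 : 0 < ((s:ℝ) + 1) / (n:ℝ) := by positivity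
  have hB1 : ((s:ℝ) + 1) / (n:ℝ) < 1 := by
    rw [div_lt_one hn0]
    have : s + 1 < n := by omega
    exact_mod_cast this
  simpa only [Js] using main_general (((s:ℝ) + 1) / (n:ℝ)) hB0 hB1 a x hx
end

section
/- Let n ≥ 2 be a natural number, let s be a natural number with 0 ≤ s ≤ n−2, set β := (s+1)/n (so 0 < β < 1), let a be a complex number and let x > 0 be a real number. Then the Riemann–Liouville fractional derivative of order β of J_s(·, a) at x, namely the derivative at x of the function y ↦ (1/Γ(1−β)) · ∫_0^y (y−t)^{−β} · J_s(t, a) dt, equals a · e^{a x}. -/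
open MeasureTheory Real

theorem integral_rpow_mul_sub_rpow {p q y : ℝ} (hp : 0 < p) (hq : 0 < q) (hy : 0 < y) :
    ∫ t in (0 : ℝ)..y, t ^ (p - 1) * (y - t) ^ (q - 1) =
      y ^ (p + q - 1) * (Gamma p * Gamma q / Gamma (p + q)) := by
  apply Complex.ofReal_injective
  have hcpow : Set.EqOn (fun t : ℝ => ((t ^ (p - 1) * (y - t) ^ (q - 1) : ℝ) : ℂ))
      (fun t : ℝ => (t : ℂ) ^ ((p : ℂ) - 1) * ((y : ℂ) - t) ^ ((q : ℂ) - 1)) (Set.uIcc 0 y) := by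
    intro t ht
    rw [Set.uIcc_of_le hy.le] at ht
    simp only [Complex.ofReal_mul]
    rw [Complex.ofReal_cpow ht.1, Complex.ofReal_cpow (sub_nonneg.2 ht.2)]
    push_cast
    rfl
  rw [← intervalIntegral.integral_ofReal, intervalIntegral.integral_congr hcpow,
    Complex.betaIntegral_scaled _ _ hy,
    Complex.betaIntegral_eq_Gamma_mul_div _ _ (by simpa using hp) (by simpa using hq)]
  rw [← Complex.ofReal_add, Complex.Gamma_ofReal, Complex.Gamma_ofReal, Complex.Gamma_ofReal,
    ← Complex.ofReal_one, ← Complex.ofReal_sub, ← Complex.ofReal_cpow hy.le]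
  norm_cast

-- The integral is nonzero, and a non-integrable function would have integral `0`.
theorem intervalIntegrable_rpow_mul_sub_rpow {p q y : ℝ} (hp : 0 < p) (hq : 0 < q) (hy : 0 < y) :
    IntervalIntegrable (fun t => t ^ (p - 1) * (y - t) ^ (q - 1)) volume 0 y := by
  apply intervalIntegral.intervalIntegrable_of_integral_ne_zero
  rw [integral_rpow_mul_sub_rpow hp hq hy]
  have := Gamma_pos_of_pos hp
  have := Gamma_pos_of_pos hq
  have := Gamma_pos_of_pos (add_pos hp hq)
  positivity

theorem integral_tsum_mul_ofReal {α : Type*} [MeasurableSpace α] {μ : Measure α}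
    {c : ℕ → ℂ} {g : ℕ → α → ℝ} (hg : ∀ k, Integrable (g k) μ) (hg0 : ∀ k, 0 ≤ᵐ[μ] g k)
    (hsum : Summable fun k => ‖c k‖ * ∫ x, g k x ∂μ) :
    ∫ x, ∑' k, c k * g k x ∂μ = ∑' k, c k * ∫ x, g k x ∂μ := by
  have hnorm : ∀ k, ∫ x, ‖c k * g k x‖ ∂μ = ‖c k‖ * ∫ x, g k x ∂μ := fun k => by
    rw [← integral_const_mul]
    refine integral_congr_ae ((hg0 k).mono fun x hx => ?_)
    change ‖c k * (g k x : ℂ)‖ = ‖c k‖ * g k x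
    rw [norm_mul, Complex.norm_real, norm_of_nonneg hx]
  rw [← integral_tsum_of_summable_integral_norm (F := fun k x => c k * (g k x : ℂ))
    (fun k => (hg k).ofReal.const_mul (c k)) (by simpa only [hnorm] using hsum)]
  simp only [integral_const_mul, integral_complex_ofReal]

theorem integral_rpow_natCast_add_mul_sub_rpow_neg {β y : ℝ} (hβ0 : 0 < β) (hβ1 : β < 1)
    (hy : 0 < y) (k : ℕ) :
    ∫ t in (0 : ℝ)..y, t ^ ((k : ℝ) + β - 1) * (y - t) ^ (-β) =
      Gamma (k + β) * Gamma (1 - β) * (y ^ k / k.factorial) := by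
  have h := integral_rpow_mul_sub_rpow (p := k + β) (q := 1 - β) (by positivity)
    (by linarith) hy
  rw [show (1 - β) - 1 = -β by ring, show (k : ℝ) + β + (1 - β) = k + 1 by ring,
    add_sub_cancel_right, rpow_natCast, Gamma_nat_eq_factorial] at h
  rw [h]
  ring

theorem integral_sub_rpow_mul_tsum_eq_exp {β y : ℝ} (hβ0 : 0 < β) (hβ1 : β < 1) (hy : 0 < y)
    (a : ℂ) :
    ((1 / Gamma (1 - β) : ℝ) : ℂ) *
      ∫ t in (0 : ℝ)..y, (((y - t) ^ (-β) : ℝ) : ℂ) *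
        ∑' k : ℕ, a ^ k * ((t ^ ((k : ℝ) + β - 1) : ℝ) : ℂ) / ((Gamma ((k : ℝ) + β) : ℝ) : ℂ) =
      Complex.exp (a * y) := by
  set g : ℕ → ℝ → ℝ := fun k t => t ^ ((k : ℝ) + β - 1) * (y - t) ^ (-β)
  set c : ℕ → ℂ := fun k => a ^ k / ((Gamma ((k : ℝ) + β) : ℝ) : ℂ)
  have hΓ : ∀ k : ℕ, 0 < Gamma ((k : ℝ) + β) := fun k => Gamma_pos_of_pos (by positivity)
  have hΓ1 : 0 < Gamma (1 - β) := Gamma_pos_of_pos (by linarith)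
  have hg : ∀ k, ∫ t in Set.Ioc 0 y, g k t =
      Gamma (k + β) * Gamma (1 - β) * (y ^ k / k.factorial) := fun k => by
    rw [← intervalIntegral.integral_of_le hy.le,
      integral_rpow_natCast_add_mul_sub_rpow_neg hβ0 hβ1 hy]
  have hcg : ∀ k, c k * ∫ t in Set.Ioc 0 y, g k t =
      Gamma (1 - β) * ((a * y) ^ k / k.factorial) := fun k => by
    simp only [c, hg]
    push_cast
    field_simp [(hΓ k).ne']
    ring
  have hsum : Summable fun k => ‖c k‖ * ∫ t in Set.Ioc 0 y, g k t := by
    refine ((Real.summable_pow_div_factorial (‖a‖ * y)).mul_left (Gamma (1 - β))).congr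
      fun k => ?_
    rw [hg, norm_div, norm_pow, Complex.norm_real, norm_of_nonneg (hΓ k).le]
    field_simp
    ring
  have hseries : ∀ t, (((y - t) ^ (-β) : ℝ) : ℂ) *
      ∑' k : ℕ, a ^ k * ((t ^ ((k : ℝ) + β - 1) : ℝ) : ℂ) / ((Gamma ((k : ℝ) + β) : ℝ) : ℂ) =
      ∑' k, c k * g k t := fun t => by
    rw [← tsum_mul_left]
    refine tsum_congr fun k => ?_
    simp only [c, g]
    push_cast
    ring
  have hint : ∀ k, IntegrableOn (g k) (Set.Ioc 0 y) := fun k => by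
    have := intervalIntegrable_rpow_mul_sub_rpow (p := k + β) (q := 1 - β) (by positivity)
      (by linarith) hy
    rw [show (1 - β) - 1 = -β by ring] at this
    exact this.1
  have hnonneg : ∀ k, 0 ≤ᵐ[volume.restrict (Set.Ioc 0 y)] g k := fun k =>
    (ae_restrict_mem measurableSet_Ioc).mono fun t ht =>
      mul_nonneg (rpow_nonneg ht.1.le _) (rpow_nonneg (sub_nonneg.2 ht.2) _)
  simp only [hseries, intervalIntegral.integral_of_le hy.le]
  rw [integral_tsum_mul_ofReal hint hnonneg hsum, tsum_congr hcg, tsum_mul_left,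
    Complex.exp_eq_exp_ℂ, NormedSpace.exp_eq_tsum_div, ← mul_assoc, ← Complex.ofReal_mul,
    one_div_mul_cancel hΓ1.ne', Complex.ofReal_one, one_mul]

/-- The Riemann–Liouville fractional derivative of order `β ∈ (0,1)`:
`D^β f(x) = d/dx [(1/Γ(1−β)) ∫_0^x (x−t)^{−β} f(t) dt]`. The statement asserts that
`D^β J_s(·, a)` at `x` equals `a · e^{a x}`, where `β = (s+1)/n`. -/
theorem stmt_4 (n : ℕ) (hn : 2 ≤ n) (s : ℕ) (hs : s ≤ n - 2)
    (β : ℝ) (hβ : β = ((s : ℝ) + 1) / (n : ℝ))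
    (a : ℂ) (x : ℝ) (hx : 0 < x) :
    HasDerivAt
      (fun y : ℝ => ((1 / Real.Gamma (1 - β) : ℝ) : ℂ) *
        ∫ t in (0 : ℝ)..y, (((y - t) ^ (-β) : ℝ) : ℂ) * Js n s t a)
      (a * Complex.exp (a * x)) x := by
  have hn0 : (0 : ℝ) < n := by positivity
  have hβ0 : 0 < β := hβ ▸ by positivity
  have hβ1 : β < 1 := by
    rw [hβ, div_lt_one hn0]
    have : (s : ℝ) + 2 ≤ n := by exact_mod_cast (by omega : s + 2 ≤ n)
    linarith
  have hexp : HasDerivAt (fun y : ℝ => Complex.exp (a * y)) (a * Complex.exp (a * x)) x := by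
    simpa [mul_comm] using ((Complex.ofRealCLM.hasDerivAt (x := x)).const_mul a).cexp
  refine hexp.congr_of_eventuallyEq ?_
  filter_upwards [Ioi_mem_nhds hx] with y hy
  subst hβ
  exact integral_sub_rpow_mul_tsum_eq_exp hβ0 hβ1 hy a
end

section
/- Let n ≥ 2 be a natural number, let ρ be a complex number and let x > 0 be a real number. Then the Riemann–Liouville fractional derivative of order 1/n of h_{1/n}(·, ρ) at x, namely the derivative at x of the function y ↦ (1/Γ(1−1/n)) · ∫_0^y (y−t)^{−1/n} · h_{1/n}(t, ρ) dt, equals ρ · h_{1/n}(x, ρ). -/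
/-!
Write `δ = 1/n`. The fractional integral of order `1 - δ` sends `t^(s-1)/Γ(s)` to
`y^(s-δ)/Γ(s+1-δ)` (a Beta integral), so integrating `h_{1/n}(·, ρ)` term by term gives the
Mittag-Leffler series `E(y) = ∑ ρ^k y^(k/n)/Γ(k/n+1)`. Differentiating `E` term by term,
`d/dy y^s/Γ(s+1) = y^(s-1)/Γ(s)` kills the constant term and turns the `(k+1)`-st term into `ρ`
times the `k`-th term of `h_{1/n}(·, ρ)`. Both interchanges rest on the summability of
`c^k/Γ(k/n + a)`, which follows from the ratio test and the Gautschi-type bound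
`Γ(s+1-δ) s^δ ≤ Γ(s+1)`, a consequence of the log-convexity of `Γ`.
-/

/-- The shifted Mittag-Leffler function
`h_{1/n}(x, ρ) = ∑_{k=0}^∞ ρ^k · x^{(k+1)/n − 1} / Γ((k+1)/n)`. -/
noncomputable def mlH (n : ℕ) (x : ℝ) (ρ : ℂ) : ℂ :=
  ∑' k : ℕ, ρ ^ k * ((x ^ (((k : ℝ) + 1) / (n : ℝ) - 1) : ℝ) : ℂ) /
    ((Real.Gamma (((k : ℝ) + 1) / (n : ℝ)) : ℝ) : ℂ)

open Real Filter MeasureTheory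

theorem Real.Gamma_add_one_sub_mul_rpow_le {s δ : ℝ} (hs : 0 < s) (hδ : 0 < δ)
    (hδ1 : δ < 1) :
    Gamma (s + 1 - δ) * s ^ δ ≤ Gamma (s + 1) := by
  have hΓ : 0 < Gamma (s + 1) := Gamma_pos_of_pos (by linarith)
  have hconv := Gamma_mul_add_mul_le_rpow_Gamma_mul_rpow_Gamma (by linarith : 0 < s + 1) hs
    (by linarith : 0 < 1 - δ) hδ (by ring)
  rw [show (1 - δ) * (s + 1) + δ * s = s + 1 - δ by ring,
    show Gamma s = Gamma (s + 1) / s by rw [Gamma_add_one hs.ne', mul_div_cancel_left₀ _ hs.ne'],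
    div_rpow hΓ.le hs.le, mul_div_assoc', ← rpow_add hΓ, sub_add_cancel, rpow_one,
    le_div_iff₀ (rpow_pos_of_pos hs δ)] at hconv
  exact hconv

theorem summable_pow_div_Gamma_div_add {N : ℝ} (hN : 1 < N) (c a : ℝ) :
    Summable fun k : ℕ => c ^ k / Gamma (k / N + a) := by
  have hδ : 0 < 1 / N := by positivity
  have hδ1 : 1 / N < 1 := by rw [div_lt_one (by linarith)]; exact hN
  have hshift : Tendsto (fun k : ℕ => (k : ℝ) / N + a + 1 / N - 1) atTop atTop := by
    refine tendsto_atTop_add_const_right _ _ (tendsto_atTop_add_const_right _ _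
      (tendsto_atTop_add_const_right _ _ ?_))
    exact tendsto_natCast_atTop_atTop.atTop_div_const (by linarith)
  have hratio : Tendsto (fun k : ℕ => |c| * ((k : ℝ) / N + a + 1 / N - 1) ^ (-(1 / N)))
      atTop (nhds 0) := by
    simpa using ((tendsto_rpow_neg_atTop hδ).comp hshift).const_mul |c|
  refine summable_of_ratio_norm_eventually_le (by norm_num : (1 : ℝ) / 2 < 1) ?_
  filter_upwards [hratio.eventually (ge_mem_nhds (by norm_num : (0 : ℝ) < 1 / 2)),
    hshift.eventually_gt_atTop 0] with k hk hs
  set s := (k : ℝ) / N + a + 1 / N - 1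
  have hgrowth : Gamma (k / N + a) * s ^ (1 / N) ≤ Gamma ((k + 1 : ℕ) / N + a) := by
    have h := Real.Gamma_add_one_sub_mul_rpow_le hs hδ hδ1
    rwa [show s + 1 - 1 / N = k / N + a by ring,
      show s + 1 = (k + 1 : ℕ) / N + a by push_cast; ring] at h
  have hΓ : 0 < Gamma (k / N + a) := Gamma_pos_of_pos (by linarith)
  have hsδ : 0 < s ^ (1 / N) := rpow_pos_of_pos hs _
  have hΓ' : 0 < Gamma ((k + 1 : ℕ) / N + a) := (mul_pos hΓ hsδ).trans_le hgrowth
  simp only [norm_div, norm_pow, Real.norm_eq_abs, abs_of_pos hΓ, abs_of_pos hΓ']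
  rw [rpow_neg hs.le, ← div_eq_mul_inv] at hk
  calc |c| ^ (k + 1) / Gamma ((k + 1 : ℕ) / N + a)
      ≤ |c| ^ (k + 1) / (Gamma (k / N + a) * s ^ (1 / N)) := by gcongr
    _ = |c| / s ^ (1 / N) * (|c| ^ k / Gamma (k / N + a)) := by ring
    _ ≤ 1 / 2 * (|c| ^ k / Gamma (k / N + a)) := by gcongr

theorem summable_pow_mul_rpow_div_Gamma {N : ℝ} (hN : 1 < N) (c : ℝ) {y : ℝ} (hy : 0 ≤ y)
    (a : ℝ) : Summable fun k : ℕ => c ^ k * y ^ (k / N) / Gamma (k / N + a) := by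
  convert summable_pow_div_Gamma_div_add hN (c * y ^ (1 / N)) a using 2 with k
  rw [mul_pow, ← rpow_mul_natCast hy, one_div_mul_eq_div]

theorem rpow_sub_one_le_rpow_div {a b y s : ℝ} (ha : 0 < a) (hay : a ≤ y) (hyb : y ≤ b)
    (hs : 0 ≤ s) : y ^ (s - 1) ≤ b ^ s / a := by
  have hy : 0 < y := ha.trans_le hay
  have hb : 0 ≤ b := hy.le.trans hyb
  rw [rpow_sub_one hy.ne']
  gcongr

/-- At `s = 0` both sides are `0`: the derivative of a constant, and `Gamma 0 = 0`. -/
theorem hasDerivAt_rpow_div_Gamma_add_one (s : ℝ) {y : ℝ} (hy : 0 < y) :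
    HasDerivAt (fun y => y ^ s / Gamma (s + 1)) (y ^ (s - 1) / Gamma s) y := by
  rcases eq_or_ne s 0 with rfl | hs
  · simpa using hasDerivAt_const y (1 : ℝ)
  · rw [Gamma_add_one hs, ← mul_div_mul_left _ (Gamma s) hs]
    exact (hasDerivAt_rpow_const (Or.inl hy.ne')).div_const _

theorem integral_rpow_mul_rpow_sub {a b y : ℝ} (ha : 0 < a) (hb : 0 < b) (hy : 0 < y) :
    ∫ t in (0 : ℝ)..y, t ^ (a - 1) * (y - t) ^ (b - 1) =
      Gamma a * Gamma b / Gamma (a + b) * y ^ (a + b - 1) := by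
  have hcomplex := Complex.betaIntegral_scaled a b hy
  rw [Complex.betaIntegral_eq_Gamma_mul_div _ _ (by simpa) (by simpa)] at hcomplex
  apply Complex.ofReal_injective
  rw [← intervalIntegral.integral_ofReal]
  have hcongr : ∫ t in (0 : ℝ)..y, ((t ^ (a - 1) * (y - t) ^ (b - 1) : ℝ) : ℂ) =
      ∫ t in (0 : ℝ)..y, (t : ℂ) ^ ((a : ℂ) - 1) * ((y : ℂ) - t) ^ ((b : ℂ) - 1) := by
    refine intervalIntegral.integral_congr fun t ht => ?_
    rw [Set.uIcc_of_le hy.le] at ht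
    push_cast [Complex.ofReal_cpow ht.1, Complex.ofReal_cpow (sub_nonneg.2 ht.2)]
    rfl
  rw [hcongr, hcomplex]
  push_cast [Complex.ofReal_cpow hy.le, ← Complex.Gamma_ofReal]
  ring

theorem integral_rpow_sub_mul_rpow_div_Gamma {s b y : ℝ} (hs : 0 < s) (hb : 0 < b) (hy : 0 < y) :
    ∫ t in (0 : ℝ)..y, (y - t) ^ (b - 1) * (t ^ (s - 1) / Gamma s) =
      Gamma b * (y ^ (s + b - 1) / Gamma (s + b)) := by
  simp_rw [mul_div_assoc', mul_comm ((y - _) ^ (b - 1))]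
  rw [intervalIntegral.integral_div, integral_rpow_mul_rpow_sub hs hb hy]
  field_simp [(Gamma_pos_of_pos hs).ne']

theorem integral_rpow_sub_mul_tsum_rpow_div_Gamma {a : ℕ → ℂ} {s : ℕ → ℝ} {b y : ℝ}
    (hs : ∀ k, 0 < s k) (hb : 0 < b) (hy : 0 < y)
    (hsum : Summable fun k => ‖a k‖ * (y ^ (s k + b - 1) / Gamma (s k + b))) :
    ∫ t in (0 : ℝ)..y, (((y - t) ^ (b - 1) : ℝ) : ℂ) *
        ∑' k, a k * ((t ^ (s k - 1) / Gamma (s k) : ℝ) : ℂ) =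
      Gamma b * ∑' k, a k * ((y ^ (s k + b - 1) / Gamma (s k + b) : ℝ) : ℂ) := by
  set f : ℕ → ℝ → ℝ := fun k t => (y - t) ^ (b - 1) * (t ^ (s k - 1) / Gamma (s k))
  have hf_integral (k : ℕ) :
      ∫ t in Set.Ioc 0 y, f k t = Gamma b * (y ^ (s k + b - 1) / Gamma (s k + b)) := by
    rw [← intervalIntegral.integral_of_le hy.le]
    exact integral_rpow_sub_mul_rpow_div_Gamma (hs k) hb hy
  -- integrable because its integral is nonzero
  have hf_int (k : ℕ) : IntegrableOn (f k) (Set.Ioc 0 y) := by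
    refine Integrable.of_integral_ne_zero ?_
    rw [hf_integral]
    have := Gamma_pos_of_pos hb
    have := Gamma_pos_of_pos (add_pos (hs k) hb)
    positivity
  have hf_nonneg (k : ℕ) : ∀ t ∈ Set.Ioc 0 y, 0 ≤ f k t := fun t ht => by
    have := Gamma_pos_of_pos (hs k)
    have := sub_nonneg.2 ht.2
    have := ht.1.le
    positivity
  set F : ℕ → ℝ → ℂ := fun k t => a k * (f k t : ℂ)
  have hF_norm (k : ℕ) : ∫ t in Set.Ioc 0 y, ‖F k t‖ =
      ‖a k‖ * (Gamma b * (y ^ (s k + b - 1) / Gamma (s k + b))) := by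
    rw [← hf_integral, ← integral_const_mul]
    refine setIntegral_congr_fun measurableSet_Ioc fun t ht => ?_
    simp [F, Complex.norm_real, Real.norm_of_nonneg (hf_nonneg k t ht)]
  calc _ = ∫ t in Set.Ioc 0 y, ∑' k, F k t := by
        rw [intervalIntegral.integral_of_le hy.le]
        refine integral_congr_ae (ae_of_all _ fun t => ?_)
        simp only [F, f, ← tsum_mul_left]
        congr 1 with k
        push_cast; ring
    _ = ∑' k, ∫ t in Set.Ioc 0 y, F k t := by
        refine (integral_tsum_of_summable_integral_norm (F := F)
          (fun k => (hf_int k).ofReal.const_mul _) ?_).symm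
        simp_rw [hF_norm, mul_left_comm _ (Gamma b)]
        exact hsum.mul_left _
    _ = _ := by
        simp only [F, integral_const_mul, integral_complex_ofReal, hf_integral, ← tsum_mul_left]
        congr 1 with k
        push_cast; ring

/-- The Mittag-Leffler function `E_{1/n}(ρ y^{1/n})`. -/
noncomputable def mittagLeffler (n : ℕ) (y : ℝ) (ρ : ℂ) : ℂ :=
  ∑' k : ℕ, ρ ^ k * ((y ^ ((k : ℝ) / n) / Gamma ((k : ℝ) / n + 1) : ℝ) : ℂ)

theorem one_div_Gamma_mul_integral_rpow_sub_mul_mlH_eq_mittagLeffler {n : ℕ} (hn : 2 ≤ n)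
    (ρ : ℂ) {y : ℝ} (hy : 0 < y) :
    ((1 / Gamma (1 - 1 / (n : ℝ)) : ℝ) : ℂ) *
        ∫ t in (0 : ℝ)..y, (((y - t) ^ (-(1 / (n : ℝ))) : ℝ) : ℂ) * mlH n t ρ =
      mittagLeffler n y ρ := by
  have hN : (1 : ℝ) < n := by exact_mod_cast hn
  have hb : 0 < 1 - 1 / (n : ℝ) := by rw [sub_pos, div_lt_one (by linarith)]; exact hN
  have hmlH (t : ℝ) : mlH n t ρ = ∑' k : ℕ,
      ρ ^ k * ((t ^ (((k : ℝ) + 1) / n - 1) / Gamma (((k : ℝ) + 1) / n) : ℝ) : ℂ) := by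
    refine tsum_congr fun k => ?_
    push_cast; ring
  have hexp (k : ℕ) : ((k : ℝ) + 1) / n + (1 - 1 / n) = k / n + 1 := by
    field_simp; ring
  have hsum : Summable fun k : ℕ => ‖ρ ^ k‖ * (y ^ (((k : ℝ) + 1) / n + (1 - 1 / n) - 1) /
      Gamma (((k : ℝ) + 1) / n + (1 - 1 / n))) := by
    simp_rw [hexp, add_sub_cancel_right, norm_pow, ← mul_div_assoc]
    exact summable_pow_mul_rpow_div_Gamma hN _ hy.le 1
  have hseries := integral_rpow_sub_mul_tsum_rpow_div_Gamma (fun k => by positivity) hb hy hsum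
  simp_rw [hexp, add_sub_cancel_right] at hseries
  simp only [hmlH]
  rw [show -(1 / (n : ℝ)) = 1 - 1 / n - 1 by ring, hseries, mittagLeffler,
    ← mul_assoc, ← Complex.ofReal_mul, one_div_mul_cancel (Gamma_pos_of_pos hb).ne',
    Complex.ofReal_one, one_mul]

theorem hasDerivAt_mittagLeffler {n : ℕ} (hn : 2 ≤ n) (ρ : ℂ) {x : ℝ} (hx : 0 < x) :
    HasDerivAt (fun y => mittagLeffler n y ρ) (ρ * mlH n x ρ) x := by
  have hN : (1 : ℝ) < n := by exact_mod_cast hn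
  set g' : ℕ → ℝ → ℂ := fun k y =>
    ρ ^ k * ((y ^ ((k : ℝ) / n - 1) / Gamma ((k : ℝ) / n) : ℝ) : ℂ)
  have hderiv (k : ℕ) (y : ℝ) (hy : y ∈ Set.Ioo (x / 2) (2 * x)) :
      HasDerivAt (fun y => ρ ^ k * ((y ^ ((k : ℝ) / n) / Gamma ((k : ℝ) / n + 1) : ℝ) : ℂ))
        (g' k y) y :=
    ((hasDerivAt_rpow_div_Gamma_add_one _ (by linarith [hy.1])).ofReal_comp).const_mul _
  have hbound (k : ℕ) (y : ℝ) (hy : y ∈ Set.Ioo (x / 2) (2 * x)) :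
      ‖g' k y‖ ≤ ‖ρ‖ ^ k * (2 * x) ^ ((k : ℝ) / n) / Gamma (k / n) / (x / 2) := by
    have hy0 : 0 < y := by linarith [hy.1]
    have hΓ := Gamma_nonneg_of_nonneg (by positivity : (0 : ℝ) ≤ k / n)
    have hpow := rpow_sub_one_le_rpow_div (by positivity) hy.1.le hy.2.le
      (by positivity : (0 : ℝ) ≤ k / n)
    simp only [g', norm_mul, norm_pow, Complex.norm_real, Real.norm_of_nonneg
      (div_nonneg (rpow_nonneg hy0.le _) hΓ)]
    calc ‖ρ‖ ^ k * (y ^ ((k : ℝ) / n - 1) / Gamma (k / n))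
        ≤ ‖ρ‖ ^ k * ((2 * x) ^ ((k : ℝ) / n) / (x / 2) / Gamma (k / n)) := by gcongr
      _ = _ := by ring
  have hsum_x : Summable fun k : ℕ =>
      ρ ^ k * ((x ^ ((k : ℝ) / n) / Gamma ((k : ℝ) / n + 1) : ℝ) : ℂ) := by
    refine Summable.of_norm ?_
    convert summable_pow_mul_rpow_div_Gamma hN ‖ρ‖ hx.le 1 using 2 with k
    rw [norm_mul, norm_pow, Complex.norm_real, Real.norm_of_nonneg (by positivity), mul_div_assoc]
  have hmem : x ∈ Set.Ioo (x / 2) (2 * x) := ⟨by linarith, by linarith⟩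
  have hu : Summable fun k : ℕ =>
      ‖ρ‖ ^ k * (2 * x) ^ ((k : ℝ) / n) / Gamma (k / n) / (x / 2) := by
    simpa only [add_zero] using
      (summable_pow_mul_rpow_div_Gamma hN ‖ρ‖ (by positivity : 0 ≤ 2 * x) 0).div_const _
  have hmain := hasDerivAt_tsum_of_isPreconnected hu isOpen_Ioo isPreconnected_Ioo hderiv hbound
    hmem hsum_x hmem
  have hsum' : Summable fun k => g' k x := hu.of_norm_bounded fun k => hbound k x hmem
  have hid : ∑' k, g' k x = ρ * mlH n x ρ := by
    rw [hsum'.tsum_eq_zero_add, mlH, ← tsum_mul_left]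
    simp only [g', CharP.cast_eq_zero, zero_div, Gamma_zero, div_zero, Complex.ofReal_zero,
      mul_zero, zero_add]
    refine tsum_congr fun k => ?_
    push_cast
    ring
  exact hid ▸ hmain

/-- The Riemann–Liouville fractional derivative of order `1/n` of `h_{1/n}(·, ρ)` at `x`
equals `ρ · h_{1/n}(x, ρ)`. -/
theorem stmt_5 (n : ℕ) (hn : 2 ≤ n) (ρ : ℂ) (x : ℝ) (hx : 0 < x) :
    HasDerivAt
      (fun y : ℝ => ((1 / Real.Gamma (1 - 1 / (n : ℝ)) : ℝ) : ℂ) *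
        ∫ t in (0 : ℝ)..y, (((y - t) ^ (-(1 / (n : ℝ))) : ℝ) : ℂ) * mlH n t ρ)
      (ρ * mlH n x ρ) x :=
  (hasDerivAt_mittagLeffler hn ρ hx).congr_of_eventuallyEq <| by
    filter_upwards [Ioi_mem_nhds hx] with y hy
    exact one_div_Gamma_mul_integral_rpow_sub_mul_mlH_eq_mittagLeffler hn ρ hy
end

section
/- Let n ≥ 1 be a natural number, let s be a natural number with 0 ≤ s ≤ n−1, set β := (s+1)/n, let a be a complex number and let x > 0 be a real number. Then J_s(x, a) = a · ∫_0^x ((x−t)^{β−1} / Γ(β)) · e^{a t} dt + x^{β−1} / Γ(β). -/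
open MeasureTheory Set
open scoped Nat

private lemma aux_beta (β : ℝ) (hβ : 0 < β) {x : ℝ} (hx : 0 < x) (k : ℕ) :
    ∫ t in (0:ℝ)..x, (t:ℂ) ^ k * ((x:ℂ) - (t:ℂ)) ^ ((β:ℂ) - 1)
      = (x:ℂ) ^ ((k:ℂ) + β) * ((k ! : ℂ) * Complex.Gamma β / Complex.Gamma (β + k + 1)) := by
  have h := Complex.betaIntegral_scaled ((k:ℂ) + 1) (β:ℂ) hx
  have h1 : ((k:ℂ) + 1 - 1) = (k:ℂ) := by ring
  have h2 : ((k:ℂ) + 1 + β - 1) = (k:ℂ) + β := by ring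
  rw [h1, h2] at h
  simp_rw [Complex.cpow_natCast] at h
  rw [h, Complex.betaIntegral_symm]
  congr 1
  have hβ' : 0 < Complex.re (β:ℂ) := by simpa using hβ
  have hk1 : 0 < Complex.re ((k:ℂ) + 1) := by
    simp only [Complex.add_re, Complex.natCast_re, Complex.one_re]
    positivity
  have hg := Complex.Gamma_mul_Gamma_eq_betaIntegral hβ' hk1
  rw [Complex.Gamma_nat_eq_factorial, show (β:ℂ) + ((k:ℂ) + 1) = (β:ℂ) + k + 1 by ring] at hg
  have hne : Complex.Gamma ((β:ℂ) + k + 1) ≠ 0 := by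
    apply Complex.Gamma_ne_zero_of_re_pos
    simp only [Complex.add_re, Complex.natCast_re, Complex.one_re, Complex.ofReal_re]
    positivity
  rw [eq_div_iff hne]
  linear_combination -hg

private lemma aux_int (β : ℝ) (hβ : 0 < β) {x : ℝ} (hx : 0 < x) :
    IntegrableOn (fun t : ℝ => (x - t) ^ (β - 1)) (Ioc 0 x) := by
  have h : IntervalIntegrable (fun t : ℝ => t ^ (β - 1)) volume 0 x :=
    intervalIntegral.intervalIntegrable_rpow' (by linarith)
  have h2 := (h.comp_sub_left x).symm
  simp only [sub_zero, sub_self] at h2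
  rwa [intervalIntegrable_iff_integrableOn_Ioc_of_le hx.le] at h2

theorem stmt_6 (n : ℕ) (hn : 1 ≤ n) (s : ℕ) (hs : s ≤ n - 1)
    (β : ℝ) (hβ : β = ((s : ℝ) + 1) / (n : ℝ))
    (a : ℂ) (x : ℝ) (hx : 0 < x) :
    Js n s x a =
      a * (∫ t in (0 : ℝ)..x,
            ((((x - t) ^ (β - 1) / Real.Gamma β) : ℝ) : ℂ) * Complex.exp (a * t)) +
        (((x ^ (β - 1) / Real.Gamma β) : ℝ) : ℂ) := by
  have hn0 : (0:ℝ) < n := by exact_mod_cast hn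
  have hβ0 : 0 < β := by rw [hβ]; positivity
  have hΓβ : 0 < Real.Gamma β := Real.Gamma_pos_of_pos hβ0
  have hΓβC : Complex.Gamma (β:ℂ) ≠ 0 := by
    apply Complex.Gamma_ne_zero_of_re_pos; simpa using hβ0
  set F : ℕ → ℝ → ℂ :=
    fun k t => ((((x - t) ^ (β - 1) / Real.Gamma β : ℝ)) : ℂ) * ((a * t) ^ k / (k ! : ℂ)) with hF
  have hbase := aux_int β hβ0 hx
  -- measurability
  have hmeas : ∀ k, AEStronglyMeasurable (F k) (volume.restrict (Ioc 0 x)) := by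
    intro k
    exact (Complex.continuous_ofReal.comp_aestronglyMeasurable
        ((hbase.div_const _).aestronglyMeasurable)).mul
      ((((continuous_const.mul Complex.continuous_ofReal).pow k).div_const _).aestronglyMeasurable)
  -- integrability of each term
  have hbound : ∀ (k : ℕ) (t : ℝ), t ∈ Ioc (0:ℝ) x →
      ‖F k t‖ ≤ (x - t) ^ (β - 1) * ((‖a‖ * x) ^ k / (k ! * Real.Gamma β)) := by
    intro k t ht
    have h1 : 0 ≤ x - t := by linarith [ht.2]
    have h2 : (0:ℝ) ≤ t := ht.1.le
    have hnorm : ‖F k t‖ = (x - t) ^ (β - 1) * ((‖a‖ * t) ^ k / (k ! * Real.Gamma β)) := by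
      rw [hF]
      simp only [norm_mul, norm_div, Complex.norm_real, norm_pow, Complex.norm_natCast,
        Real.norm_eq_abs]
      rw [abs_of_pos hΓβ, abs_of_nonneg h2, abs_of_nonneg (Real.rpow_nonneg h1 _)]
      ring
    rw [hnorm]
    gcongr
    exact ht.2
  have hFint : ∀ k, IntegrableOn (F k) (Ioc 0 x) := by
    intro k
    refine Integrable.mono'
      (hbase.mul_const ((‖a‖ * x) ^ k / (k ! * Real.Gamma β))) (hmeas k) ?_
    rw [ae_restrict_iff' measurableSet_Ioc]
    filter_upwards with t ht
    exact hbound k t ht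
  -- summability of the integrals of norms
  have hnormsum : Summable fun k => ∫ t in Ioc (0:ℝ) x, ‖F k t‖ := by
    have hb : Summable fun k : ℕ =>
        (∫ t in Ioc (0:ℝ) x, (x - t) ^ (β - 1)) * ((‖a‖ * x) ^ k / (k ! * Real.Gamma β)) := by
      have := (Real.summable_pow_div_factorial (‖a‖ * x)).mul_left
        ((∫ t in Ioc (0:ℝ) x, (x - t) ^ (β - 1)) / Real.Gamma β)
      refine this.congr fun k => ?_
      ring
    refine Summable.of_nonneg_of_le (fun k => integral_nonneg fun t => norm_nonneg _)
      (fun k => ?_) hb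
    rw [← integral_mul_const]
    exact setIntegral_mono_on (hFint k).norm
      (hbase.mul_const ((‖a‖ * x) ^ k / (k ! * Real.Gamma β))) measurableSet_Ioc
      (fun t ht => hbound k t ht)
  -- swap sum and integral
  have hswap := MeasureTheory.integral_tsum_of_summable_integral_norm hFint hnormsum
  -- pointwise sum equals the integrand
  have hptsum : ∀ t : ℝ, (∑' k, F k t)
      = ((((x - t) ^ (β - 1) / Real.Gamma β : ℝ)) : ℂ) * Complex.exp (a * t) := by
    intro t
    rw [Complex.exp_eq_exp_ℂ, NormedSpace.exp_eq_tsum_div]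
    exact tsum_mul_left
  -- value of each integral
  have hterm : ∀ k : ℕ, (∫ t in Ioc (0:ℝ) x, F k t)
      = a ^ k * ((x ^ ((k:ℝ) + β) : ℝ) : ℂ) / ((Real.Gamma ((k:ℝ) + β + 1) : ℝ) : ℂ) := by
    intro k
    rw [← intervalIntegral.integral_of_le hx.le]
    have hcong : ∀ t ∈ Icc (0:ℝ) x, F k t
        = (a ^ k / ((k ! : ℂ) * Complex.Gamma (β:ℂ)))
            * ((t:ℂ) ^ k * ((x:ℂ) - (t:ℂ)) ^ ((β:ℂ) - 1)) := by
      intro t ht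
      have h1 : 0 ≤ x - t := by linarith [ht.2]
      simp only [hF]
      have hc1 : (((x - t) ^ (β - 1) : ℝ) : ℂ) = ((x:ℂ) - (t:ℂ)) ^ ((β:ℂ) - 1) := by
        rw [Complex.ofReal_cpow h1]
        norm_cast
      have hg0 : ((Real.Gamma β : ℝ) : ℂ) ≠ 0 := by exact_mod_cast hΓβ.ne'
      have hk0 : ((k ! : ℕ) : ℂ) ≠ 0 := by exact_mod_cast (Nat.factorial_pos k).ne'
      rw [Complex.ofReal_div, hc1, mul_pow, Complex.Gamma_ofReal]
      field_simp
    rw [intervalIntegral.integral_congr (g :=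
      fun t => (a ^ k / ((k ! : ℂ) * Complex.Gamma (β:ℂ)))
        * ((t:ℂ) ^ k * ((x:ℂ) - (t:ℂ)) ^ ((β:ℂ) - 1)))
      (fun t ht => hcong t (by rwa [Set.uIcc_of_le hx.le] at ht))]
    rw [intervalIntegral.integral_const_mul, aux_beta β hβ0 hx k]
    have hxc : ((x ^ ((k:ℝ) + β) : ℝ) : ℂ) = ((x:ℂ)) ^ ((k:ℂ) + (β:ℂ)) := by
      rw [Complex.ofReal_cpow hx.le]
      norm_cast
    have hgc : Complex.Gamma ((β:ℂ) + (k:ℂ) + 1) = ((Real.Gamma ((k:ℝ) + β + 1) : ℝ) : ℂ) := by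
      rw [show ((β:ℂ) + (k:ℂ) + 1) = (((k:ℝ) + β + 1 : ℝ) : ℂ) by push_cast; ring,
        Complex.Gamma_ofReal]
    rw [← hxc, hgc]
    have hne : ((Real.Gamma ((k:ℝ) + β + 1) : ℝ) : ℂ) ≠ 0 := by
      exact_mod_cast (Real.Gamma_pos_of_pos (by positivity)).ne'
    have hkne : ((k ! : ℕ) : ℂ) ≠ 0 := by exact_mod_cast (Nat.factorial_pos k).ne'
    field_simp
  -- summability of the series defining Js
  have hsumf : Summable (fun k : ℕ => a ^ k * ((x ^ ((k:ℝ) + β - 1) : ℝ) : ℂ) /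
      ((Real.Gamma ((k:ℝ) + β) : ℝ) : ℂ)) := by
    apply summable_of_ratio_norm_eventually_le (r := 1/2) (by norm_num)
    filter_upwards [Filter.eventually_ge_atTop ⌈2 * ‖a‖ * x⌉₊] with k hk
    have hkβ : (0:ℝ) < (k:ℝ) + β := by positivity
    have hΓk : 0 < Real.Gamma ((k:ℝ) + β) := Real.Gamma_pos_of_pos hkβ
    have hX : (0:ℝ) < x ^ ((k:ℝ) + β - 1) := Real.rpow_pos_of_pos hx _
    have hkx : 2 * ‖a‖ * x ≤ (k:ℝ) + β := by
      have h1 : (2 * ‖a‖ * x : ℝ) ≤ (⌈2 * ‖a‖ * x⌉₊ : ℝ) := Nat.le_ceil _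
      have h2 : ((⌈2 * ‖a‖ * x⌉₊ : ℕ) : ℝ) ≤ (k:ℝ) := by exact_mod_cast hk
      linarith
    have nf : ∀ m : ℕ, ‖a ^ m * ((x ^ ((m:ℝ) + β - 1) : ℝ) : ℂ) /
        ((Real.Gamma ((m:ℝ) + β) : ℝ) : ℂ)‖
        = ‖a‖ ^ m * x ^ ((m:ℝ) + β - 1) / Real.Gamma ((m:ℝ) + β) := by
      intro m
      have hm : (0:ℝ) < (m:ℝ) + β := by positivity
      rw [norm_div, norm_mul, norm_pow, Complex.norm_real, Complex.norm_real,
        Real.norm_eq_abs, Real.norm_eq_abs,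
        abs_of_pos (Real.rpow_pos_of_pos hx _), abs_of_pos (Real.Gamma_pos_of_pos hm)]
    rw [nf, nf]
    have e1 : ((k + 1 : ℕ) : ℝ) + β - 1 = ((k:ℝ) + β - 1) + 1 := by push_cast; ring
    have e2 : ((k + 1 : ℕ) : ℝ) + β = ((k:ℝ) + β) + 1 := by push_cast; ring
    rw [e1, e2, Real.rpow_add_one hx.ne', Real.Gamma_add_one hkβ.ne', pow_succ]
    rw [← mul_div_assoc, div_le_div_iff₀ (by positivity) hΓk]
    have key : ‖a‖ * x ≤ 1 / 2 * ((k:ℝ) + β) := by linarith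
    nlinarith [mul_nonneg (sub_nonneg.2 key)
      (by positivity : (0:ℝ) ≤ ‖a‖ ^ k * x ^ ((k:ℝ) + β - 1) * Real.Gamma ((k:ℝ) + β))]
  -- assemble
  simp only [Js, ← hβ]
  rw [Summable.tsum_eq_zero_add hsumf]
  rw [add_comm]
  congr 1
  · -- tail sum equals a * integral
    have hI : (∫ t in (0:ℝ)..x,
          ((((x - t) ^ (β - 1) / Real.Gamma β) : ℝ) : ℂ) * Complex.exp (a * t))
        = ∑' k : ℕ, (∫ t in Ioc (0:ℝ) x, F k t) := by
      rw [intervalIntegral.integral_of_le hx.le, hswap]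
      exact (setIntegral_congr_fun measurableSet_Ioc fun t _ => (hptsum t).symm)
    rw [hI, ← tsum_mul_left]
    refine tsum_congr fun k => ?_
    rw [hterm k]
    push_cast
    rw [show ((k:ℝ) + 1 + β - 1) = (k:ℝ) + β by ring,
      show ((k:ℝ) + 1 + β) = (k:ℝ) + β + 1 by ring, pow_succ]
    ring
  · -- first term
    push_cast
    simp
end

section
/- Let β > 0 be a real number, let a be a complex number, and let x₀, x be real numbers with 0 ≤ x₀ ≤ x. Then ∫_{x₀}^x (x−t)^{β−1} · e^{a t} dt = e^{a x} · ∑_{m=0}^∞ ((−1)^m / m!) · a^m · (x − x₀)^{β+m} / (β + m). -/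
open MeasureTheory

theorem stmt_8 (β : ℝ) (hβ : 0 < β) (a : ℂ) (x₀ x : ℝ) (hx₀ : 0 ≤ x₀) (hx : x₀ ≤ x) :
    (∫ t in x₀..x, (((x - t) ^ (β - 1) : ℝ) : ℂ) * Complex.exp (a * t)) =
      Complex.exp (a * x) *
        ∑' m : ℕ, ((-1) ^ m / (Nat.factorial m : ℂ)) * a ^ m *
          (((x - x₀) ^ (β + (m : ℝ)) : ℝ) : ℂ) / ((β + (m : ℝ) : ℝ) : ℂ) := by
  have hc : 0 ≤ x - x₀ := sub_nonneg.2 hx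
  set c := x - x₀ with hcdef
  set F : ℕ → ℝ → ℂ := fun m t =>
    ((-1) ^ m * a ^ m / (Nat.factorial m : ℂ)) * (((x - t) ^ (β - 1 + (m : ℝ)) : ℝ) : ℂ) with hF
  have hrm : ∀ m : ℕ, (-1 : ℝ) < β - 1 + (m : ℝ) := by
    intro m
    have := Nat.cast_nonneg (α := ℝ) m
    linarith
  have hβm : ∀ m : ℕ, (0 : ℝ) < β + (m : ℝ) := by
    intro m
    have := Nat.cast_nonneg (α := ℝ) m
    linarith
  -- interval integrability of t ↦ (x - t)^r
  have hII : ∀ r : ℝ, -1 < r → IntervalIntegrable (fun t => ((x - t) ^ r : ℝ)) volume x₀ x := by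
    intro r hr
    have h := (intervalIntegral.intervalIntegrable_rpow' (a := x - x₀) (b := 0) hr).comp_sub_left x
    simpa using h
  -- value of the interval integral of t ↦ (x - t)^r
  have hval : ∀ r : ℝ, -1 < r → r + 1 ≠ 0 →
      (∫ t in x₀..x, ((x - t) ^ r : ℝ)) = c ^ (r + 1) / (r + 1) := by
    intro r hr hr1
    rw [intervalIntegral.integral_comp_sub_left (fun s => s ^ r) x]
    rw [sub_self, integral_rpow (Or.inl hr), Real.zero_rpow hr1, sub_zero]
  have hvalm : ∀ m : ℕ,
      (∫ t in x₀..x, ((x - t) ^ (β - 1 + (m : ℝ)) : ℝ)) = c ^ (β + (m : ℝ)) / (β + (m : ℝ)) := by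
    intro m
    have h1 : β - 1 + (m : ℝ) + 1 = β + (m : ℝ) := by ring
    have := hval (β - 1 + (m : ℝ)) (hrm m) (by rw [h1]; exact (hβm m).ne')
    rwa [h1] at this
  -- integrability of F m on Ioo
  have hFint : ∀ m : ℕ, IntegrableOn (F m) (Set.Ioo x₀ x) volume := by
    intro m
    have h1 : IntegrableOn (fun t => ((x - t) ^ (β - 1 + (m : ℝ)) : ℝ)) (Set.Ioc x₀ x) volume :=
      (intervalIntegrable_iff_integrableOn_Ioc_of_le hx).1 (hII _ (hrm m))
    exact ((h1.mono_set Set.Ioo_subset_Ioc_self).ofReal.const_mul _)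
  -- value of ∫ F m over Ioo
  have hFval : ∀ m : ℕ, (∫ t in Set.Ioo x₀ x, F m t) =
      ((-1) ^ m * a ^ m / (Nat.factorial m : ℂ)) * ((c ^ (β + (m : ℝ)) / (β + (m : ℝ)) : ℝ) : ℂ) := by
    intro m
    rw [hF]
    rw [MeasureTheory.integral_const_mul _]
    congr 1
    have hcast : (∫ t in Set.Ioo x₀ x, (((x - t) ^ (β - 1 + (m : ℝ)) : ℝ) : ℂ))
        = ((∫ t in Set.Ioo x₀ x, ((x - t) ^ (β - 1 + (m : ℝ)) : ℝ) : ℝ) : ℂ) :=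
      integral_ofReal
    rw [hcast]
    congr 1
    rw [← MeasureTheory.integral_Ioc_eq_integral_Ioo, ← intervalIntegral.integral_of_le hx]
    exact hvalm m
  -- norm of the integral of ‖F m‖ over Ioo
  have hFnorm : ∀ m : ℕ, (∫ t in Set.Ioo x₀ x, ‖F m t‖) =
      (‖a‖ ^ m / (Nat.factorial m : ℝ)) * (c ^ (β + (m : ℝ)) / (β + (m : ℝ))) := by
    intro m
    have heq : Set.EqOn (fun t => ‖F m t‖)
        (fun t => (‖a‖ ^ m / (Nat.factorial m : ℝ)) * ((x - t) ^ (β - 1 + (m : ℝ)) : ℝ))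
        (Set.Ioo x₀ x) := by
      intro t ht
      have hxt : (0 : ℝ) ≤ x - t := by linarith [ht.2]
      simp only [hF, norm_mul, norm_div, norm_pow, norm_neg, norm_one, one_pow,
        Complex.norm_real, Complex.norm_natCast, Real.norm_eq_abs, one_mul,
        abs_of_nonneg (Real.rpow_nonneg hxt _)]
    rw [MeasureTheory.setIntegral_congr_fun measurableSet_Ioo heq,
      MeasureTheory.integral_const_mul _, ← MeasureTheory.integral_Ioc_eq_integral_Ioo,
      ← intervalIntegral.integral_of_le hx, hvalm m]
  -- summability of the norms
  have hsumR : Summable (fun m : ℕ =>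
      (‖a‖ ^ m / (Nat.factorial m : ℝ)) * (c ^ (β + (m : ℝ)) / (β + (m : ℝ)))) := by
    refine Summable.of_nonneg_of_le (fun m => ?_) (fun m => ?_)
      ((Real.summable_pow_div_factorial (‖a‖ * c)).mul_left (c ^ β / β))
    · exact mul_nonneg (by positivity) (div_nonneg (Real.rpow_nonneg hc _) (hβm m).le)
    have h1 : c ^ (β + (m : ℝ)) = c ^ β * c ^ m := by
      rw [Real.rpow_add' hc (hβm m).ne', Real.rpow_natCast]
    have h2 : (‖a‖ ^ m / (Nat.factorial m : ℝ)) * (c ^ β * c ^ m / (β + (m : ℝ)))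
        = (c ^ β * ((‖a‖ * c) ^ m / (Nat.factorial m : ℝ))) / (β + (m : ℝ)) := by
      rw [mul_pow]; ring
    have h3 : (c ^ β / β) * ((‖a‖ * c) ^ m / (Nat.factorial m : ℝ))
        = (c ^ β * ((‖a‖ * c) ^ m / (Nat.factorial m : ℝ))) / β := by ring
    rw [h1, h2, h3]
    gcongr
    · linarith [Nat.cast_nonneg (α := ℝ) m]
  have hFsum : Summable (fun m : ℕ => ∫ t in Set.Ioo x₀ x, ‖F m t‖) :=
    hsumR.congr (fun m => (hFnorm m).symm)
  -- pointwise identity on Ioo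
  have hpt : Set.EqOn (fun t : ℝ => (((x - t) ^ (β - 1) : ℝ) : ℂ) * Complex.exp (a * t))
      (fun t : ℝ => Complex.exp (a * x) * ∑' m : ℕ, F m t) (Set.Ioo x₀ x) := by
    intro t ht
    have hxt : (0 : ℝ) < x - t := by linarith [ht.2]
    have hsum : HasSum (fun m : ℕ => F m t)
        ((((x - t) ^ (β - 1) : ℝ) : ℂ) * Complex.exp (a * (t - x))) := by
      have h := (NormedSpace.expSeries_div_hasSum_exp (a * ((t : ℂ) - x))).mul_left
        ((((x - t) ^ (β - 1) : ℝ) : ℂ))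
      have hfun : ∀ m : ℕ, F m t =
          (((x - t) ^ (β - 1) : ℝ) : ℂ) * ((a * ((t : ℂ) - x)) ^ m / (Nat.factorial m : ℂ)) := by
        intro m
        have hr : ((x - t) ^ (β - 1 + (m : ℝ)) : ℝ) = (x - t) ^ (β - 1) * (x - t) ^ m := by
          rw [Real.rpow_add hxt, Real.rpow_natCast]
        have hp : (a * ((t : ℂ) - x)) ^ m = (-1) ^ m * a ^ m * ((x : ℂ) - t) ^ m := by
          rw [show a * ((t : ℂ) - x) = (-1) * (a * ((x : ℂ) - t)) by ring, mul_pow, mul_pow]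
          ring
        rw [hF]
        simp only [hr, hp]
        push_cast
        ring
      rw [funext hfun, Complex.exp_eq_exp_ℂ]
      exact h
    show (((x - t) ^ (β - 1) : ℝ) : ℂ) * Complex.exp (a * t)
      = Complex.exp (a * x) * ∑' m : ℕ, F m t
    rw [hsum.tsum_eq]
    have hmul : Complex.exp (a * x) * Complex.exp (a * ((t : ℂ) - x)) = Complex.exp (a * t) := by
      rw [← Complex.exp_add]
      congr 1
      ring
    rw [← hmul]
    ring
  -- main computation
  rw [intervalIntegral.integral_of_le hx, MeasureTheory.integral_Ioc_eq_integral_Ioo,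
    MeasureTheory.setIntegral_congr_fun measurableSet_Ioo hpt,
    MeasureTheory.integral_const_mul _]
  congr 1
  rw [← MeasureTheory.integral_tsum_of_summable_integral_norm hFint hFsum]
  refine tsum_congr fun m => ?_
  rw [hFval m]
  push_cast
  ring
end

section
/- Let n ≥ 1 be a natural number, let s be a natural number with 0 ≤ s ≤ n−1, set β := (s+1)/n, let a be a complex number and let x > 0 be a real number. Then J_s(x, a) = a · e^{a x} · (1/Γ(β)) · ∑_{m=0}^∞ ((−1)^m / m!) · a^m · x^{β+m} / (β + m) + x^{β−1} / Γ(β). -/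
open Finset

lemma aux_Gamma_prod {β : ℝ} (hβ : 0 < β) (K : ℕ) :
    Real.Gamma (β + K) = Real.Gamma β * ∏ i ∈ Finset.range K, (β + i) := by
  induction K with
  | zero => simp
  | succ K ih =>
    have h1 : β + ((K+1 : ℕ) : ℝ) = (β + K) + 1 := by push_cast; ring
    rw [h1, Real.Gamma_add_one (by positivity), ih, Finset.prod_range_succ]; ring

lemma aux_shift (K : ℕ) (c : ℝ) :
    ∏ i ∈ Finset.range (K+2), (c + i) = c * ∏ i ∈ Finset.range (K+1), (c + 1 + i) := by
  rw [Finset.prod_range_succ' (fun i => (c + (i:ℝ))) (K+1)]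
  push_cast
  rw [add_zero, mul_comm]
  congr 1
  exact Finset.prod_congr rfl fun i _ => by ring

lemma aux_pf (K : ℕ) : ∀ β : ℝ, 0 < β →
    ∑ m ∈ Finset.range (K+1), (-1:ℝ)^m * (K.choose m) / (β + m)
      = (K.factorial : ℝ) / ∏ i ∈ Finset.range (K+1), (β + i) := by
  induction K with
  | zero => intro β hβ; simp
  | succ K ih =>
    intro β hβ
    have hP : (0:ℝ) < ∏ i ∈ Finset.range (K+1), (β + i) :=
      Finset.prod_pos (fun i _ => by positivity)
    have hQ : (0:ℝ) < ∏ i ∈ Finset.range (K+1), (β + 1 + i) :=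
      Finset.prod_pos (fun i _ => by positivity)
    have hprod : β * ∏ i ∈ Finset.range (K+1), (β + 1 + i)
        = (∏ i ∈ Finset.range (K+1), (β + i)) * (β + (K+1)) := by
      rw [← aux_shift K β, Finset.prod_range_succ]
      push_cast; ring
    have key : ∑ m ∈ Finset.range (K+2), (-1:ℝ)^m * ((K+1).choose m) / (β + m)
        = (∑ m ∈ Finset.range (K+1), (-1:ℝ)^m * (K.choose m) / (β + m))
          - ∑ m ∈ Finset.range (K+1), (-1:ℝ)^m * (K.choose m) / ((β+1) + m) := by
      rw [Finset.sum_range_succ' (fun m => (-1:ℝ)^m * ((K+1).choose m) / (β + m)) (K+1)]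
      push_cast
      have e1 : ∀ m ∈ Finset.range (K+1),
          (-1:ℝ)^(m+1) * (((K+1).choose (m+1) : ℕ) : ℝ) / (β + ((m:ℝ) + 1))
          = -((-1:ℝ)^m * (K.choose m) / ((β+1) + m))
            - (-1:ℝ)^m * (K.choose (m+1)) / (β + m + 1) := by
        intro m _
        rw [Nat.choose_succ_succ]
        push_cast
        ring
      rw [Finset.sum_congr rfl e1, Finset.sum_sub_distrib]
      have e3 : ∑ m ∈ Finset.range (K+1), (-1:ℝ)^m * (K.choose (m+1)) / (β + m + 1)
          = ∑ m ∈ Finset.range K, (-1:ℝ)^m * (K.choose (m+1)) / (β + m + 1) := by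
        rw [Finset.sum_range_succ]
        simp [Nat.choose_succ_self]
      have e5 : ∑ m ∈ Finset.range (K+1), (-1:ℝ)^m * (K.choose m) / (β + m)
          = ∑ m ∈ Finset.range K, (-1:ℝ)^(m+1) * (K.choose (m+1)) / (β + m + 1)
            + 1/β := by
        rw [Finset.sum_range_succ' (fun m => (-1:ℝ)^m * (K.choose m) / (β + m)) K]
        push_cast
        simp only [pow_zero, Nat.choose_zero_right, Nat.cast_one, add_zero, one_mul, mul_one]
        rw [add_left_inj]
        exact Finset.sum_congr rfl fun m _ => by ring
      have e4 : ∑ m ∈ Finset.range K, (-1:ℝ)^m * (K.choose (m+1)) / (β + m + 1)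
          = -∑ m ∈ Finset.range K, (-1:ℝ)^(m+1) * (K.choose (m+1)) / (β + m + 1) := by
        rw [← Finset.sum_neg_distrib]
        exact Finset.sum_congr rfl fun m _ => by ring
      rw [Finset.sum_neg_distrib, e3, e4, e5]
      simp only [Nat.add_comm 1 K, Nat.choose_zero_right, Nat.cast_one, add_zero, mul_one,
        one_mul]
      ring
    rw [key, ih β hβ, ih (β+1) (by positivity)]
    have hfac : (((K+1).factorial : ℕ) : ℝ) = ((K:ℝ)+1) * (K.factorial : ℝ) := by
      rw [Nat.factorial_succ]; push_cast; ring
    have hexp : ∏ i ∈ Finset.range (K+1+1), (β + (i:ℝ))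
        = (∏ i ∈ Finset.range (K+1), (β + (i:ℝ))) * (β + ((K:ℝ)+1)) := by
      rw [Finset.prod_range_succ]; norm_num
    rw [hexp, hfac]
    set P := ∏ i ∈ Finset.range (K+1), (β + (i:ℝ)) with hPdef
    set Q := ∏ i ∈ Finset.range (K+1), (β + 1 + (i:ℝ)) with hQdef
    rw [div_sub_div _ _ (ne_of_gt hP) (ne_of_gt hQ),
      div_eq_div_iff (by positivity) (by positivity)]
    linear_combination ((K.factorial:ℝ) * P) * hprod

theorem stmt_9 (n : ℕ) (hn : 1 ≤ n) (s : ℕ) (hs : s ≤ n - 1)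
    (β : ℝ) (hβ : β = ((s : ℝ) + 1) / (n : ℝ))
    (a : ℂ) (x : ℝ) (hx : 0 < x) :
    Js n s x a =
      a * Complex.exp (a * x) * ((1 / Real.Gamma β : ℝ) : ℂ) *
        (∑' m : ℕ, ((-1) ^ m / (Nat.factorial m : ℂ)) * a ^ m *
          ((x ^ (β + (m : ℝ)) : ℝ) : ℂ) / ((β + (m : ℝ) : ℝ) : ℂ)) +
      (((x ^ (β - 1) / Real.Gamma β) : ℝ) : ℂ) := by
  rw [Js]
  have hn0 : (0:ℝ) < (n:ℝ) := by exact_mod_cast hn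
  have hβ0 : 0 < β := by rw [hβ]; positivity
  have hΓβ : 0 < Real.Gamma β := Real.Gamma_pos_of_pos hβ0
  set f : ℕ → ℂ := fun k => a ^ k * ((x ^ ((k : ℝ) + β - 1) : ℝ) : ℂ) /
      ((Real.Gamma ((k : ℝ) + β) : ℝ) : ℂ) with hf_def
  have hLHS : (∑' k : ℕ, a ^ k * ((x ^ ((k : ℝ) + ((s : ℝ) + 1) / (n : ℝ) - 1) : ℝ) : ℂ) /
      ((Real.Gamma ((k : ℝ) + ((s : ℝ) + 1) / (n : ℝ)) : ℝ) : ℂ)) = ∑' k, f k := by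
    simp only [hf_def, ← hβ]
  rw [hLHS]
  have hf0 : f 0 = (((x ^ (β - 1) / Real.Gamma β) : ℝ) : ℂ) := by
    simp only [hf_def, pow_zero, Nat.cast_zero, zero_add, one_mul, Complex.ofReal_div]
  rcases eq_or_ne a 0 with ha | ha
  · subst ha
    rw [tsum_eq_single 0 (by intro k hk; simp [hf_def, zero_pow hk])]
    rw [hf0]; ring
  -- a ≠ 0
  set u : ℕ → ℂ := fun j => (a * x) ^ j / (j.factorial : ℂ) with hu_def
  set v : ℕ → ℂ := fun m => ((-1) ^ m / (m.factorial : ℂ)) * a ^ m *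
      ((x ^ (β + (m : ℝ)) : ℝ) : ℂ) / ((β + (m : ℝ) : ℝ) : ℂ) with hv_def
  have hu : Summable fun j => ‖u j‖ := by
    refine (Real.summable_pow_div_factorial ‖a * (x:ℂ)‖).congr fun j => ?_
    simp [hu_def, norm_div, norm_pow]
  have hv : Summable fun m => ‖v m‖ := by
    refine Summable.of_nonneg_of_le (fun m => norm_nonneg _) (fun m => ?_)
      ((Real.summable_pow_div_factorial (‖a‖ * x)).mul_left (x ^ β / β))
    have hbm : (0:ℝ) < β + m := by positivity
    have h1 : ‖v m‖ = x ^ β * (‖a‖ * x) ^ m / ((m.factorial : ℝ) * (β + m)) := by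
      simp only [hv_def, norm_div, norm_mul, norm_pow, Complex.norm_real, norm_neg, norm_one,
        Complex.norm_natCast, one_pow, Real.norm_eq_abs]
      rw [abs_of_pos (Real.rpow_pos_of_pos hx _), abs_of_pos hbm,
        Real.rpow_add hx, Real.rpow_natCast]
      field_simp
      ring
    rw [h1]
    have h2 : x ^ β / β * ((‖a‖ * x) ^ m / (m.factorial : ℝ))
        = x ^ β * (‖a‖ * x) ^ m / ((m.factorial : ℝ) * β) := by ring
    rw [h2]
    gcongr
    linarith [Nat.cast_nonneg (α := ℝ) m]
  have hperK : ∀ K : ℕ, ∑ kl ∈ Finset.HasAntidiagonal.antidiagonal K, u kl.1 * v kl.2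
      = a ^ K * ((x ^ (β + (K:ℝ)) : ℝ) : ℂ) *
        ((Real.Gamma β / Real.Gamma (β + K + 1) : ℝ) : ℂ) := by
    intro K
    have hswap : ∑ kl ∈ Finset.HasAntidiagonal.antidiagonal K, u kl.1 * v kl.2
        = ∑ m ∈ Finset.range (K+1), u (K - m) * v m := by
      rw [← Finset.HasAntidiagonal.map_swap_antidiagonal, Finset.sum_map]
      exact Finset.Nat.sum_antidiagonal_eq_sum_range_succ_mk (fun p => u p.2 * v p.1) K
    have hterm : ∀ m ∈ Finset.range (K+1), u (K - m) * v m
        = a ^ K * ((x ^ (β + (K:ℝ)) : ℝ) : ℂ) *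
          ((((-1:ℝ))^m * (K.choose m) / (K.factorial * (β + m)) : ℝ) : ℂ) := by
      intro m hm
      have hmK : m ≤ K := Nat.lt_succ_iff.mp (Finset.mem_range.mp hm)
      have hbm : (0:ℝ) < β + m := by positivity
      have hchoose : ((K.choose m) : ℝ) * m.factorial * (K-m).factorial = K.factorial := by
        exact_mod_cast congrArg (Nat.cast (R := ℝ)) (Nat.choose_mul_factorial_mul_factorial hmK)
      have hpow : a ^ (K - m) * a ^ m = a ^ K := pow_sub_mul_pow a hmK
      have hxpow : ((x:ℂ)) ^ (K - m) * ((x ^ (β + (m:ℝ)) : ℝ) : ℂ)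
          = ((x ^ (β + (K:ℝ)) : ℝ) : ℂ) := by
        rw [← Complex.ofReal_pow, ← Complex.ofReal_mul]
        congr 1
        rw [← Real.rpow_natCast x (K - m), ← Real.rpow_add hx]
        congr 1
        push_cast [hmK]
        ring
      have step1 : u (K - m) * v m
          = (a ^ (K - m) * a ^ m) * (((x:ℂ)) ^ (K - m) * ((x ^ (β + (m:ℝ)) : ℝ) : ℂ)) *
            ((-1:ℂ)^m / (((K-m).factorial : ℂ) * (m.factorial : ℂ) * ((β + (m:ℝ) : ℝ) : ℂ))) := by
        simp only [hu_def, hv_def, mul_pow]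
        ring
      rw [step1, hpow, hxpow]
      congr 1
      have hne1 : (((K-m).factorial : ℂ)) ≠ 0 := Nat.cast_ne_zero.mpr (Nat.factorial_ne_zero _)
      have hne2 : ((m.factorial : ℂ)) ≠ 0 := Nat.cast_ne_zero.mpr (Nat.factorial_ne_zero _)
      have hne3 : ((β + (m:ℝ) : ℝ) : ℂ) ≠ 0 := by
        exact_mod_cast Complex.ofReal_ne_zero.mpr hbm.ne'
      have hne4 : ((K.factorial : ℂ)) ≠ 0 := Nat.cast_ne_zero.mpr (Nat.factorial_ne_zero _)
      have hchooseC : ((K.choose m) : ℂ) * (m.factorial : ℂ) * ((K-m).factorial : ℂ)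
          = (K.factorial : ℂ) := by exact_mod_cast congrArg (Complex.ofReal) hchoose
      have hp1 : (0:ℝ) < ((K-m).factorial : ℝ) := by exact_mod_cast Nat.factorial_pos (K-m)
      have hp2 : (0:ℝ) < (m.factorial : ℝ) := by exact_mod_cast Nat.factorial_pos m
      have hp4 : (0:ℝ) < (K.factorial : ℝ) := by exact_mod_cast Nat.factorial_pos K
      have hreal : (-1:ℝ)^m / (((K-m).factorial:ℝ) * (m.factorial:ℝ) * (β+(m:ℝ)))
          = (-1:ℝ)^m * (K.choose m) / ((K.factorial:ℝ) * (β+(m:ℝ))) := by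
        rw [div_eq_div_iff (by positivity) (by positivity)]
        linear_combination (-((-1:ℝ)^m * (β+(m:ℝ)))) * hchoose
      rw [show ((-1:ℂ))^m / (((K-m).factorial : ℂ) * (m.factorial : ℂ) * ((β + (m:ℝ) : ℝ) : ℂ))
          = (((-1:ℝ)^m / (((K-m).factorial:ℝ) * (m.factorial:ℝ) * (β+(m:ℝ))) : ℝ) : ℂ) by
        push_cast; ring]
      rw [hreal]
    rw [hswap, Finset.sum_congr rfl hterm, ← Finset.mul_sum]
    congr 1
    rw [← Complex.ofReal_sum]
    congr 1
    have hGamma : Real.Gamma (β + K + 1)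
        = Real.Gamma β * ∏ i ∈ Finset.range (K+1), (β + i) := by
      have := aux_Gamma_prod hβ0 (K+1)
      rw [← this]
      congr 1
      push_cast
      ring
    have hP : (0:ℝ) < ∏ i ∈ Finset.range (K+1), (β + i) :=
      Finset.prod_pos (fun i _ => by positivity)
    have hsum : ∑ m ∈ Finset.range (K+1),
        (-1:ℝ)^m * (K.choose m) / ((K.factorial : ℝ) * (β + m))
        = (∑ m ∈ Finset.range (K+1), (-1:ℝ)^m * (K.choose m) / (β + m)) / K.factorial := by
      rw [Finset.sum_div]
      refine Finset.sum_congr rfl fun m _ => ?_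
      rw [div_div, mul_comm ((K.factorial:ℝ)) (β + m)]
    rw [hsum, aux_pf K β hβ0, hGamma]
    have hKf : ((K.factorial : ℕ) : ℝ) ≠ 0 := Nat.cast_ne_zero.mpr (Nat.factorial_ne_zero _)
    field_simp
  -- assemble
  have hexp : Complex.exp (a * x) = ∑' j, u j := by
    rw [Complex.exp_eq_exp_ℂ, NormedSpace.exp_eq_tsum_div]
  have htermwise : ∀ K : ℕ, (a * ((1 / Real.Gamma β : ℝ) : ℂ)) *
      (a ^ K * ((x ^ (β + (K:ℝ)) : ℝ) : ℂ) *
        ((Real.Gamma β / Real.Gamma (β + K + 1) : ℝ) : ℂ)) = f (K + 1) := by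
    intro K
    have hΓK : (0:ℝ) < Real.Gamma (β + K + 1) := Real.Gamma_pos_of_pos (by positivity)
    have h1 : ((K + 1 : ℕ) : ℝ) + β - 1 = β + K := by push_cast; ring
    have h2 : ((K + 1 : ℕ) : ℝ) + β = β + K + 1 := by push_cast; ring
    have h3 : ((Real.Gamma β : ℝ) : ℂ) ≠ 0 := Complex.ofReal_ne_zero.mpr hΓβ.ne'
    have h4 : ((Real.Gamma (β + K + 1) : ℝ) : ℂ) ≠ 0 := Complex.ofReal_ne_zero.mpr hΓK.ne'
    simp only [hf_def, h1, h2, pow_succ]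
    push_cast
    field_simp
    ring
  have hCauchySummable : Summable fun K => f (K + 1) := by
    have h1 := ((summable_norm_sum_mul_antidiagonal_of_summable_norm hu hv).of_norm).mul_left
      (a * ((1 / Real.Gamma β : ℝ) : ℂ))
    refine h1.congr fun K => ?_
    rw [hperK K]
    exact htermwise K
  have hfSummable : Summable f := (summable_nat_add_iff 1).mp hCauchySummable
  have hmain : a * Complex.exp (a * x) * ((1 / Real.Gamma β : ℝ) : ℂ) * (∑' m, v m)
      = ∑' K, f (K + 1) := by
    rw [hexp]
    have h1 : a * (∑' j, u j) * ((1 / Real.Gamma β : ℝ) : ℂ) * (∑' m, v m)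
        = (a * ((1 / Real.Gamma β : ℝ) : ℂ)) * ((∑' j, u j) * (∑' m, v m)) := by ring
    rw [h1, tsum_mul_tsum_eq_tsum_sum_antidiagonal_of_summable_norm hu hv, ← tsum_mul_left]
    exact tsum_congr fun K => by rw [hperK K]; exact htermwise K
  rw [Summable.tsum_eq_zero_add hfSummable, hf0, hmain]
  ring
end

section
/- Let n ≥ 1 be a natural number, let ρ be a complex number and let x > 0 be a real number. Then the shifted Mittag-Leffler function is represented through exponential functions by h_{1/n}(x, ρ) = ∑_{s=0}^{n−1} [ ρ^{s+n} · e^{ρ^n x} · (1/Γ((s+1)/n)) · ∑_{k=0}^∞ ((−1)^k / k!) · ρ^{n k} · x^{(s+1)/n + k} / ((s+1)/n + k) + ρ^s · x^{(s+1)/n − 1} / Γ((s+1)/n) ]. -/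
section helpers
open Finset

lemma pf_sum : ∀ (q : ℕ) (a : ℝ), 0 < a →
    ∑ j ∈ range (q+1), (-1:ℝ)^j * (q.choose j) / (a + j)
      = q.factorial / ∏ j ∈ range (q+1), (a + j) := by
  intro q
  induction q with
  | zero => intro a ha; simp
  | succ q ih =>
    intro a ha
    have ha1 : (0:ℝ) < a + 1 := by linarith
    have hPa : (0:ℝ) < ∏ j ∈ range (q+1), (a + j) :=
      Finset.prod_pos (fun j _ => by positivity)
    have hPa1 : (0:ℝ) < ∏ j ∈ range (q+1), (a + 1 + j) :=
      Finset.prod_pos (fun j _ => by positivity)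
    rw [Finset.sum_range_succ' (fun j => (-1:ℝ)^j * ((q+1).choose j) / (a + j)) (q+1)]
    have h1 : ∑ i ∈ range (q+1), (-1:ℝ)^(i+1) * (((q+1).choose (i+1) : ℕ)) / (a + (i+1:ℕ))
        = (∑ i ∈ range (q+1), (-1:ℝ)^(i+1) * (q.choose i) / (a + (i+1:ℕ)))
          + ∑ i ∈ range (q+1), (-1:ℝ)^(i+1) * (q.choose (i+1)) / (a + (i+1:ℕ)) := by
      rw [← Finset.sum_add_distrib]
      refine Finset.sum_congr rfl fun i _ => ?_
      rw [Nat.choose_succ_succ]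
      push_cast
      ring
    have h2 : ∑ i ∈ range (q+1), (-1:ℝ)^(i+1) * (q.choose i) / (a + (i+1:ℕ))
        = - (q.factorial / ∏ j ∈ range (q+1), (a + 1 + j)) := by
      rw [← ih (a+1) ha1, ← Finset.sum_neg_distrib]
      refine Finset.sum_congr rfl fun i _ => ?_
      push_cast
      ring
    have h3 : ∑ i ∈ range (q+1), (-1:ℝ)^(i+1) * (q.choose (i+1)) / (a + (i+1:ℕ))
        = (q.factorial / ∏ j ∈ range (q+1), (a + j)) - 1/a := by
      rw [← ih a ha]
      rw [Finset.sum_range_succ' (fun j => (-1:ℝ)^j * (q.choose j)/(a+j)) q]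
      rw [Finset.sum_range_succ (fun i => (-1:ℝ)^(i+1) * (q.choose (i+1))/(a+(i+1:ℕ))) q]
      simp [Nat.choose_succ_self]
    have prodA : ∏ j ∈ range (q+2), (a + (j:ℕ)) = (∏ j ∈ range (q+1), (a + j)) * (a + (q+1:ℕ)) :=
      Finset.prod_range_succ _ _
    have prodB : ∏ j ∈ range (q+2), (a + (j:ℕ)) = (∏ j ∈ range (q+1), (a + 1 + j)) * a := by
      rw [Finset.prod_range_succ' (fun j => (a + (j:ℕ))) (q+1)]
      congr 1
      · refine Finset.prod_congr rfl fun i _ => ?_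
        push_cast; ring
      · simp
    rw [h1, h2, h3]
    rw [prodA]
    have haq : (0:ℝ) < a + (q+1:ℕ) := by positivity
    have key : (∏ j ∈ range (q+1), (a + 1 + j)) * a = (∏ j ∈ range (q+1), (a + j)) * (a + (q+1:ℕ)) := by
      rw [← prodB, prodA]
    have goal2 : (q.factorial:ℝ)/(∏ j ∈ range (q+1), (a + j)) - q.factorial/(∏ j ∈ range (q+1), (a + 1 + j))
        = ((q+1) * q.factorial)/((∏ j ∈ range (q+1), (a + j))*(a+(q+1:ℕ))) := by
      rw [div_sub_div _ _ hPa.ne' hPa1.ne', div_eq_div_iff (by positivity) (by positivity)]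
      push_cast
      push_cast at key
      linear_combination ((q.factorial:ℝ) * ∏ j ∈ range (q+1), (a + j)) * key
    rw [Nat.factorial_succ]
    norm_num
    push_cast
    push_cast at goal2
    linarith [goal2]

lemma Gamma_prod (a : ℝ) (ha : 0 < a) : ∀ q : ℕ,
    Real.Gamma (a + q) = Real.Gamma a * ∏ j ∈ range q, (a + j) := by
  intro q
  induction q with
  | zero => simp
  | succ q ih =>
    have h1 : a + (q+1:ℕ) = (a + q) + 1 := by push_cast; ring
    rw [h1, Real.Gamma_add_one (by positivity), ih, Finset.prod_range_succ]
    ring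

lemma coeff_id (a : ℝ) (ha : 0 < a) (q : ℕ) :
    ∑ j ∈ range (q+1), (-1:ℝ)^j / (j.factorial * (q-j).factorial * (a + j))
      = Real.Gamma a / Real.Gamma (a + q + 1) := by
  have hP : (0:ℝ) < ∏ j ∈ range (q+1), (a + j) :=
    Finset.prod_pos (fun j _ => by positivity)
  have hG : Real.Gamma (a + q + 1) = Real.Gamma a * ∏ j ∈ range (q+1), (a + j) := by
    have := Gamma_prod a ha (q+1)
    rw [← this]; congr 1; push_cast; ring
  have hsum : ∑ j ∈ range (q+1), (-1:ℝ)^j / (j.factorial * (q-j).factorial * (a + j))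
      = (∑ j ∈ range (q+1), (-1:ℝ)^j * (q.choose j) / (a + j)) / q.factorial := by
    rw [Finset.sum_div]
    refine Finset.sum_congr rfl fun j hj => ?_
    have hj' : j ≤ q := Nat.lt_succ_iff.mp (Finset.mem_range.mp hj)
    have hc : ((q.choose j : ℝ)) * j.factorial * (q-j).factorial = q.factorial := by
      exact_mod_cast Nat.choose_mul_factorial_mul_factorial hj'
    have hjf : (j.factorial : ℝ) ≠ 0 := Nat.cast_ne_zero.mpr (Nat.factorial_ne_zero j)
    have hqjf : ((q-j).factorial : ℝ) ≠ 0 := Nat.cast_ne_zero.mpr (Nat.factorial_ne_zero _)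
    have hqf : (q.factorial : ℝ) ≠ 0 := Nat.cast_ne_zero.mpr (Nat.factorial_ne_zero q)
    have haj : a + (j:ℝ) ≠ 0 := by positivity
    field_simp
    linear_combination (-1:ℝ) * hc
  rw [hsum, pf_sum q a ha, hG]
  have hGa := Real.Gamma_pos_of_pos ha
  have hqf : (q.factorial : ℝ) ≠ 0 := Nat.cast_ne_zero.mpr (Nat.factorial_ne_zero q)
  field_simp

lemma summable_norm_g (w : ℂ) : Summable fun i : ℕ => ‖w^i / (i.factorial : ℂ)‖ := by
  have := Real.summable_pow_div_factorial ‖w‖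
  refine this.congr fun i => ?_
  rw [norm_div, norm_pow, Complex.norm_natCast]

lemma summable_norm_f (a : ℝ) (ha : 0 < a) (w : ℂ) :
    Summable fun j : ℕ => ‖(-1:ℂ)^j * w^j / ((j.factorial : ℂ) * (((a + j : ℝ)) : ℂ))‖ := by
  refine Summable.of_nonneg_of_le (fun j => norm_nonneg _) (fun j => ?_)
    (((Real.summable_pow_div_factorial ‖w‖).mul_left a⁻¹))
  have haj : (0:ℝ) < a + j := by positivity
  rw [norm_div, norm_mul, norm_mul, norm_pow, norm_pow, Complex.norm_natCast,
    Complex.norm_real, Real.norm_eq_abs, norm_neg, norm_one, one_pow, one_mul, abs_of_pos haj]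
  rw [div_le_iff₀ (by positivity)]
  have h1 : ‖w‖ ^ j ≤ a⁻¹ * (‖w‖ ^ j / (j.factorial:ℝ)) * ((j.factorial:ℝ) * (a + j)) ↔ True := by
    constructor
    · intro _; trivial
    · intro _
      have hjf : (0:ℝ) < (j.factorial:ℝ) := by positivity
      have : a⁻¹ * (‖w‖ ^ j / (j.factorial:ℝ)) * ((j.factorial:ℝ) * (a + j))
          = ‖w‖ ^ j * (a⁻¹ * (a + j)) := by field_simp
      rw [this]
      have h2 : (1:ℝ) ≤ a⁻¹ * (a + j) := by
        rw [le_inv_mul_iff₀ ha, mul_one]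
        simp
      nlinarith [pow_nonneg (norm_nonneg w) j]
  rw [h1]; trivial

lemma core (a : ℝ) (ha : 0 < a) (w : ℂ) :
    (∑' j : ℕ, (-1:ℂ)^j * w^j / ((j.factorial : ℂ) * (((a + j : ℝ)) : ℂ))) * Complex.exp w
      = (Real.Gamma a : ℂ) * ∑' q : ℕ, w^q / ((Real.Gamma (a + q + 1) : ℝ) : ℂ) := by
  have hexp : Complex.exp w = ∑' i : ℕ, w^i / (i.factorial : ℂ) := by
    rw [Complex.exp_eq_exp_ℂ, NormedSpace.exp_eq_tsum_div]
  rw [hexp, tsum_mul_tsum_eq_tsum_sum_antidiagonal_of_summable_norm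
    (summable_norm_f a ha w) (summable_norm_g w)]
  rw [← tsum_mul_left]
  congr 1
  funext q
  rw [Finset.Nat.sum_antidiagonal_eq_sum_range_succ
    (fun j i => (-1:ℂ)^j * w^j / ((j.factorial : ℂ) * (((a + j : ℝ)) : ℂ)) * (w^i / (i.factorial : ℂ)))]
  have step : ∀ j ∈ range (q+1),
      (-1:ℂ)^j * w^j / ((j.factorial : ℂ) * (((a + j : ℝ)) : ℂ)) * (w^(q-j) / ((q-j).factorial : ℂ))
        = (((-1:ℝ)^j / (j.factorial * (q-j).factorial * (a + j)) : ℝ) : ℂ) * w^q := by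
    intro j hj
    have hj' : j ≤ q := Nat.lt_succ_iff.mp (Finset.mem_range.mp hj)
    have hw : w^j * w^(q-j) = w^q := by rw [← pow_add, Nat.add_sub_cancel' hj']
    push_cast
    rw [div_mul_div_comm, ← hw]
    have h1 : ((j.factorial:ℂ)) ≠ 0 := Nat.cast_ne_zero.mpr (Nat.factorial_ne_zero j)
    have h2 : (((q-j).factorial:ℂ)) ≠ 0 := Nat.cast_ne_zero.mpr (Nat.factorial_ne_zero _)
    have h3 : ((a:ℂ) + j) ≠ 0 := by
      intro h
      have := congrArg Complex.re h
      simp [Complex.add_re] at this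
      have haj : (0:ℝ) < a + j := by positivity
      linarith
    field_simp
  rw [Finset.sum_congr rfl step, ← Finset.sum_mul, ← Complex.ofReal_sum, coeff_id a ha q]
  push_cast
  have hG : ((Real.Gamma (a+q+1) : ℝ):ℂ) ≠ 0 := by
    simp only [ne_eq, Complex.ofReal_eq_zero]
    exact (Real.Gamma_pos_of_pos (by positivity)).ne'
  field_simp

lemma Gamma_lb (a : ℝ) (ha : 0 < a) (q : ℕ) :
    Real.Gamma a * a * q.factorial ≤ Real.Gamma (a + q + 1) := by
  have h := Gamma_prod a ha (q+1)
  have hc : a + ((q+1:ℕ):ℝ) = a + q + 1 := by push_cast; ring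
  rw [hc] at h
  rw [h, Finset.prod_range_succ' (fun j => a + (j:ℕ)) q]
  simp only [Nat.cast_zero, add_zero]
  have hfac : (q.factorial:ℝ) ≤ ∏ j ∈ range q, (a + ((j+1:ℕ):ℝ)) := by
    have h1 : (q.factorial:ℝ) = ∏ j ∈ range q, ((j:ℝ)+1) := by
      rw [← Finset.prod_range_add_one_eq_factorial]
      push_cast; rfl
    rw [h1]
    refine Finset.prod_le_prod (fun j _ => by positivity) (fun j _ => ?_)
    push_cast; linarith
  have hGa := Real.Gamma_pos_of_pos ha
  calc Real.Gamma a * a * q.factorial ≤ Real.Gamma a * a * ∏ j ∈ range q, (a + ((j+1:ℕ):ℝ)) := by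
        have := mul_le_mul_of_nonneg_left hfac (le_of_lt (by positivity : (0:ℝ) < Real.Gamma a * a))
        linarith
    _ = Real.Gamma a * ((∏ j ∈ range q, (a + ((j+1:ℕ):ℝ))) * a) := by ring

lemma class_summable_norm (a : ℝ) (ha : 0 < a) {x : ℝ} (hx : 0 < x) (z c : ℂ) :
    Summable fun q : ℕ =>
      ‖c * z^q * ((x ^ (a + q - 1) : ℝ) : ℂ) / ((Real.Gamma (a + q) : ℝ) : ℂ)‖ := by
  rw [← summable_nat_add_iff 1]
  refine Summable.of_nonneg_of_le (fun _ => norm_nonneg _) (fun q => ?_)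
    ((Real.summable_pow_div_factorial (‖z‖*x)).mul_left
      (‖c‖ * ‖z‖ * x ^ (a-1) * x / (Real.Gamma a * a)))
  have hGa := Real.Gamma_pos_of_pos ha
  have hG1 : (0:ℝ) < Real.Gamma (a + (q+1:ℕ)) := Real.Gamma_pos_of_pos (by positivity)
  have hxq : (0:ℝ) < x ^ (a + (q+1:ℕ) - 1) := Real.rpow_pos_of_pos hx _
  rw [norm_div, norm_mul, norm_mul, norm_pow, Complex.norm_real, Complex.norm_real,
    Real.norm_eq_abs, Real.norm_eq_abs, abs_of_pos hxq, abs_of_pos hG1]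
  have hxsplit : x ^ (a + (q+1:ℕ) - 1) = x ^ (a-1) * x * x ^ q := by
    rw [show a + ((q+1:ℕ):ℝ) - 1 = (a - 1) + 1 + (q:ℝ) by push_cast; ring,
      Real.rpow_add hx, Real.rpow_add hx, Real.rpow_one, Real.rpow_natCast]
  have hGineq : Real.Gamma a * a * q.factorial ≤ Real.Gamma (a + (q+1:ℕ)) := by
    have := Gamma_lb a ha q
    have hc : a + ((q+1:ℕ):ℝ) = a + q + 1 := by push_cast; ring
    rw [hc]; exact this
  rw [hxsplit]
  have hqf : (0:ℝ) < (q.factorial:ℝ) := by positivity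
  rw [div_le_iff₀ hG1]
  have hrhs : ‖c‖ * ‖z‖ * x ^ (a-1) * x / (Real.Gamma a * a) * ((‖z‖*x)^q / q.factorial)
        * (Real.Gamma a * a * q.factorial)
      = ‖c‖ * ‖z‖ ^ (q+1) * (x ^ (a-1) * x * x ^ q) := by
    field_simp
    ring
  calc ‖c‖ * ‖z‖ ^ (q+1) * (x ^ (a-1) * x * x ^ q)
      = ‖c‖ * ‖z‖ * x ^ (a-1) * x / (Real.Gamma a * a) * ((‖z‖*x)^q / q.factorial)
        * (Real.Gamma a * a * q.factorial) := hrhs.symm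
    _ ≤ ‖c‖ * ‖z‖ * x ^ (a-1) * x / (Real.Gamma a * a) * ((‖z‖*x)^q / q.factorial)
        * Real.Gamma (a + (q+1:ℕ)) := by
        refine mul_le_mul_of_nonneg_left hGineq ?_
        positivity

lemma class_value (a : ℝ) (ha : 0 < a) {x : ℝ} (hx : 0 < x) (z c : ℂ) :
    ∑' q : ℕ, c * z^q * ((x ^ (a + q - 1) : ℝ) : ℂ) / ((Real.Gamma (a + q) : ℝ) : ℂ)
      = c * z * Complex.exp (z * x) * ((1 / Real.Gamma a : ℝ) : ℂ) *
          (∑' k : ℕ, ((-1)^k / (k.factorial : ℂ)) * z^k * ((x ^ (a + k) : ℝ) : ℂ) /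
            (((a + k : ℝ)) : ℂ))
        + c * ((x ^ (a - 1) : ℝ) : ℂ) / ((Real.Gamma a : ℝ) : ℂ) := by
  set w : ℂ := z * x with hw
  have hGa := Real.Gamma_pos_of_pos ha
  -- inner sum in terms of the core series
  have hinner : (∑' k : ℕ, ((-1)^k / (k.factorial : ℂ)) * z^k * ((x ^ (a + k) : ℝ) : ℂ) /
        (((a + k : ℝ)) : ℂ))
      = ((x ^ a : ℝ) : ℂ) * ∑' k : ℕ, (-1:ℂ)^k * w^k / ((k.factorial : ℂ) * (((a + k : ℝ)) : ℂ)) := by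
    rw [← tsum_mul_left]
    refine tsum_congr fun k => ?_
    have hxk : x ^ (a + (k:ℝ)) = x ^ a * x ^ (k:ℕ) := by
      rw [Real.rpow_add hx, Real.rpow_natCast]
    rw [hxk, hw]
    have h1 : ((k.factorial:ℂ)) ≠ 0 := Nat.cast_ne_zero.mpr (Nat.factorial_ne_zero k)
    have h2 : (((a + k : ℝ)):ℂ) ≠ 0 := by
      simp only [ne_eq, Complex.ofReal_eq_zero]
      positivity
    push_cast
    rw [mul_pow]
    field_simp
  -- summability of the class series
  have hsum : Summable fun q : ℕ =>
      c * z^q * ((x ^ (a + q - 1) : ℝ) : ℂ) / ((Real.Gamma (a + q) : ℝ) : ℂ) :=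
    (class_summable_norm a ha hx z c).of_norm
  rw [hsum.tsum_eq_zero_add]
  have h0 : c * z^(0:ℕ) * ((x ^ (a + (0:ℕ) - 1) : ℝ) : ℂ) / ((Real.Gamma (a + (0:ℕ)) : ℝ) : ℂ)
      = c * ((x ^ (a - 1) : ℝ) : ℂ) / ((Real.Gamma a : ℝ) : ℂ) := by
    norm_num
  rw [h0, add_comm]
  congr 1
  -- shifted sum
  have hshift : ∀ q : ℕ,
      c * z^(q+1) * ((x ^ (a + ((q+1:ℕ):ℝ) - 1) : ℝ) : ℂ) / ((Real.Gamma (a + ((q+1:ℕ):ℝ)) : ℝ) : ℂ)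
        = (c * z * ((x ^ (a-1) : ℝ) : ℂ) * (x:ℂ)) *
            (w^q / ((Real.Gamma (a + q + 1) : ℝ) : ℂ)) := by
    intro q
    have hx1 : x ^ (a + ((q+1:ℕ):ℝ) - 1) = x ^ (a-1) * x * x ^ (q:ℕ) := by
      rw [show a + ((q+1:ℕ):ℝ) - 1 = (a-1) + 1 + (q:ℝ) by push_cast; ring,
        Real.rpow_add hx, Real.rpow_add hx, Real.rpow_one, Real.rpow_natCast]
    have hG : a + ((q+1:ℕ):ℝ) = a + q + 1 := by push_cast; ring
    rw [hx1, hG, hw]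
    push_cast
    rw [mul_pow]
    ring
  rw [tsum_congr hshift, tsum_mul_left]
  have hcore := core a ha w
  rw [show (∑' q : ℕ, w^q / ((Real.Gamma (a + q + 1) : ℝ) : ℂ))
      = ((Real.Gamma a : ℝ):ℂ)⁻¹ * ((∑' j : ℕ, (-1:ℂ)^j * w^j / ((j.factorial : ℂ) * (((a + j : ℝ)) : ℂ))) * Complex.exp w) by
    rw [hcore]
    rw [← mul_assoc, inv_mul_cancel₀ (by simpa using hGa.ne'), one_mul]]
  rw [hinner]
  have hxa : x ^ a = x ^ (a-1) * x := by
    rw [show a = (a-1) + 1 by ring, Real.rpow_add hx, Real.rpow_one]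
    ring_nf
  rw [hxa]
  push_cast
  ring

end helpers

section main
open Finset


theorem stmt_10 (n : ℕ) (hn : 1 ≤ n) (ρ : ℂ) (x : ℝ) (hx : 0 < x) :
    mlH n x ρ =
      ∑ s ∈ Finset.range n,
        (ρ ^ (s + n) * Complex.exp (ρ ^ n * x) *
            ((1 / Real.Gamma (((s : ℝ) + 1) / (n : ℝ)) : ℝ) : ℂ) *
            (∑' k : ℕ, ((-1) ^ k / (Nat.factorial k : ℂ)) * ρ ^ (n * k) *
              ((x ^ (((s : ℝ) + 1) / (n : ℝ) + (k : ℝ)) : ℝ) : ℂ) /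
              ((((s : ℝ) + 1) / (n : ℝ) + (k : ℝ) : ℝ) : ℂ)) +
          ρ ^ s * ((x ^ (((s : ℝ) + 1) / (n : ℝ) - 1) : ℝ) : ℂ) /
            ((Real.Gamma (((s : ℝ) + 1) / (n : ℝ)) : ℝ) : ℂ)) := by
  haveI : NeZero n := ⟨by omega⟩
  have hn0 : (n:ℝ) ≠ 0 := Nat.cast_ne_zero.mpr (by omega)
  set F : ℕ → ℂ := fun k => ρ ^ k * ((x ^ (((k : ℝ) + 1) / (n : ℝ) - 1) : ℝ) : ℂ) /
    ((Real.Gamma (((k : ℝ) + 1) / (n : ℝ)) : ℝ) : ℂ) with hFdef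
  have ha : ∀ s : Fin n, (0:ℝ) < (((s:ℕ):ℝ)+1)/n := fun s => by positivity
  have hFcanon : ∀ (q : ℕ) (s : Fin n), F (q*n + (s:ℕ)) =
      ρ^(s:ℕ) * (ρ^n)^q * ((x ^ ((((s:ℕ):ℝ)+1)/(n:ℝ) + q - 1) : ℝ) : ℂ)
        / ((Real.Gamma ((((s:ℕ):ℝ)+1)/(n:ℝ) + q) : ℝ) : ℂ) := by
    intro q s
    have hcast : (((q*n + (s:ℕ) : ℕ):ℝ) + 1)/(n:ℝ) = (((s:ℕ):ℝ)+1)/(n:ℝ) + q := by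
      field_simp
      push_cast
      ring
    rw [hFdef]
    simp only
    rw [hcast, show q*n + (s:ℕ) = (s:ℕ) + n*q by ring, pow_add, pow_mul]
  have hclassnorm : ∀ s : Fin n, Summable fun q : ℕ => ‖F (q*n + (s:ℕ))‖ := by
    intro s
    refine ((class_summable_norm _ (ha s) hx (ρ^n) (ρ^(s:ℕ))).congr fun q => ?_)
    rw [hFcanon q s]
  have hclass : ∀ s : Fin n, Summable fun q : ℕ => F (q*n + (s:ℕ)) :=
    fun s => (hclassnorm s).of_norm
  have hprodsum : Summable (fun p : ℕ × Fin n => F ((Nat.divModEquiv n).symm p)) := by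
    apply Summable.of_norm
    refine (summable_prod_of_nonneg (fun _ => norm_nonneg _)).mpr
      ⟨fun q => Summable.of_finite, ?_⟩
    refine Summable.congr (summable_sum (s := Finset.univ)
      (f := fun (s : Fin n) (q : ℕ) => ‖F (q*n + (s:ℕ))‖) (fun s _ => hclassnorm s))
      (fun q => ?_)
    rw [tsum_fintype]
    rfl
  have hFsum : Summable F := (Equiv.summable_iff (Nat.divModEquiv n).symm).mp hprodsum
  have h1 : mlH n x ρ = ∑' p : ℕ × Fin n, F ((Nat.divModEquiv n).symm p) :=
    ((Nat.divModEquiv n).symm.tsum_eq F).symm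
  rw [h1]
  have h2 : ∑' p : ℕ × Fin n, F ((Nat.divModEquiv n).symm p)
      = ∑' q : ℕ, ∑' s : Fin n, F (q*n + (s:ℕ)) :=
    Summable.tsum_prod' hprodsum (fun q => Summable.of_finite)
  rw [h2]
  have h3 : ∑' q : ℕ, ∑' s : Fin n, F (q*n + (s:ℕ))
      = ∑' q : ℕ, ∑ s : Fin n, F (q*n + (s:ℕ)) :=
    tsum_congr fun q => tsum_fintype _
  rw [h3]
  have h4 : ∑' q : ℕ, ∑ s : Fin n, F (q*n + (s:ℕ))
      = ∑ s : Fin n, ∑' q : ℕ, F (q*n + (s:ℕ)) :=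
    Summable.tsum_finsetSum (fun s _ => hclass s)
  rw [h4]
  have h5 : ∀ s : Fin n, ∑' q : ℕ, F (q*n + (s:ℕ))
      = ρ ^ ((s:ℕ) + n) * Complex.exp (ρ ^ n * x) *
            ((1 / Real.Gamma ((((s:ℕ) : ℝ) + 1) / (n : ℝ)) : ℝ) : ℂ) *
            (∑' k : ℕ, ((-1) ^ k / (Nat.factorial k : ℂ)) * ρ ^ (n * k) *
              ((x ^ ((((s:ℕ) : ℝ) + 1) / (n : ℝ) + (k : ℝ)) : ℝ) : ℂ) /
              (((((s:ℕ) : ℝ) + 1) / (n : ℝ) + (k : ℝ) : ℝ) : ℂ)) +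
          ρ ^ (s:ℕ) * ((x ^ ((((s:ℕ) : ℝ) + 1) / (n : ℝ) - 1) : ℝ) : ℂ) /
            ((Real.Gamma ((((s:ℕ) : ℝ) + 1) / (n : ℝ)) : ℝ) : ℂ) := by
    intro s
    rw [tsum_congr (fun q => hFcanon q s),
      class_value ((((s:ℕ):ℝ)+1)/(n:ℝ)) (ha s) hx (ρ^n) (ρ^(s:ℕ))]
    simp only [pow_add, pow_mul]
  rw [Finset.sum_congr rfl (fun s _ => h5 s)]
  exact Fin.sum_univ_eq_sum_range (fun s : ℕ =>
    ρ ^ (s + n) * Complex.exp (ρ ^ n * x) *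
        ((1 / Real.Gamma (((s : ℝ) + 1) / (n : ℝ)) : ℝ) : ℂ) *
        (∑' k : ℕ, ((-1) ^ k / (Nat.factorial k : ℂ)) * ρ ^ (n * k) *
          ((x ^ (((s : ℝ) + 1) / (n : ℝ) + (k : ℝ)) : ℝ) : ℂ) /
          ((((s : ℝ) + 1) / (n : ℝ) + (k : ℝ) : ℝ) : ℂ)) +
      ρ ^ s * ((x ^ (((s : ℝ) + 1) / (n : ℝ) - 1) : ℝ) : ℂ) /
        ((Real.Gamma (((s : ℝ) + 1) / (n : ℝ)) : ℝ) : ℂ)) n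

end main
end

section
/- Let n ≥ 1 be a natural number, let x > 0 be a real number and let ρ be a complex number. Then h_{1/n}(x, ρ) = ∑_{s=0}^{n−1} ρ^s · ( ρ^n · ∫_0^x ((x−t)^{(s+1)/n − 1} / Γ((s+1)/n)) · e^{ρ^n t} dt + x^{(s+1)/n − 1} / Γ((s+1)/n) ), i.e., the shifted Mittag-Leffler function equals a finite combination of Riemann–Liouville fractional integrals of the exponential function e^{ρ^n t} plus power functions. -/
open MeasureTheory Complex

lemma gamma_fact_le {α : ℝ} (hα : 0 < α) (m : ℕ) :
    Real.Gamma (α + 1) * (Nat.factorial m : ℝ) ≤ Real.Gamma (α + m + 1) := by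
  induction m with
  | zero => simp
  | succ m ih =>
    have h1 : α + ((m : ℝ) + 1) + 1 = (α + m + 1) + 1 := by ring
    have h2 : Real.Gamma (α + (m + 1 : ℕ) + 1) = (α + m + 1) * Real.Gamma (α + m + 1) := by
      push_cast
      rw [h1, Real.Gamma_add_one (by positivity)]
    rw [h2, Nat.factorial_succ]
    push_cast
    calc Real.Gamma (α + 1) * ((m + 1) * (Nat.factorial m : ℝ))
        = ((m : ℝ) + 1) * (Real.Gamma (α + 1) * (Nat.factorial m : ℝ)) := by ring
      _ ≤ (α + m + 1) * (Real.Gamma (α + 1) * (Nat.factorial m : ℝ)) := by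
          have h3 : (0:ℝ) ≤ Real.Gamma (α + 1) * (Nat.factorial m : ℝ) := by
            positivity
          nlinarith
      _ ≤ (α + m + 1) * Real.Gamma (α + m + 1) := by
          have := ih
          nlinarith [Real.Gamma_pos_of_pos (show (0:ℝ) < α + 1 by linarith)]

lemma summable_pow_div_gamma {α : ℝ} (hα : 0 < α) (r : ℝ) (hr : 0 ≤ r) :
    Summable (fun j : ℕ => r ^ j / Real.Gamma (α + j)) := by
  rw [← summable_nat_add_iff 1]
  refine Summable.of_nonneg_of_le (fun j => by positivity) (fun j => ?_)
    ((Real.summable_pow_div_factorial r).mul_left (r / Real.Gamma (α + 1)))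
  have hg : Real.Gamma (α + 1) * (Nat.factorial j : ℝ) ≤ Real.Gamma (α + (j + 1 : ℕ)) := by
    have := gamma_fact_le hα j
    push_cast
    convert this using 2
    ring
  have hΓ1 : (0:ℝ) < Real.Gamma (α + 1) := Real.Gamma_pos_of_pos (by linarith)
  have hfac : (0:ℝ) < ((Nat.factorial j : ℝ) : ℝ) := by positivity
  have key : r ^ (j + 1) / Real.Gamma (α + (j + 1 : ℕ))
      ≤ r ^ (j + 1) / (Real.Gamma (α + 1) * (Nat.factorial j : ℝ)) := by
    gcongr
  refine key.trans (le_of_eq ?_)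
  rw [pow_succ]
  field_simp

lemma per_m {α x : ℝ} (hα : 0 < α) (hx : 0 < x) (l : ℂ) (m : ℕ) :
    (∫ t in Set.Ioc (0:ℝ) x, (((x - t) ^ (α - 1) : ℝ) : ℂ) * ((l * t) ^ m / (Nat.factorial m : ℂ)))
      = l ^ m * ((Real.Gamma α * (x ^ (α + m) / Real.Gamma (α + m + 1)) : ℝ) : ℂ) := by
  have hfac : ((Nat.factorial m : ℂ)) ≠ 0 := by
    exact_mod_cast (Nat.factorial_ne_zero m)
  have hΓα := Real.Gamma_pos_of_pos hα
  have hΓs := Real.Gamma_pos_of_pos (show (0:ℝ) < α + m + 1 by positivity)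
  have hJ := Complex.betaIntegral_scaled ((m:ℂ)+1) (α:ℂ) hx
  have hmain : (∫ t in Set.Ioc (0:ℝ) x,
        (((x - t) ^ (α - 1) : ℝ) : ℂ) * ((l * t) ^ m / (Nat.factorial m : ℂ)))
      = (l ^ m / (Nat.factorial m : ℂ)) *
        ∫ t in Set.Ioc (0:ℝ) x, ((t:ℂ) ^ ((m:ℂ) + 1 - 1) * ((x:ℂ) - (t:ℂ)) ^ ((α:ℂ) - 1)) := by
    rw [← integral_const_mul]
    refine setIntegral_congr_fun measurableSet_Ioc fun t ht => ?_
    have h1 : ((m:ℂ) + 1) - 1 = ((m : ℕ) : ℂ) := by ring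
    rw [h1, Complex.cpow_natCast]
    have h2 : ((x:ℂ) - (t:ℂ)) = ((x - t : ℝ) : ℂ) := by push_cast; ring
    have h3 : ((x:ℂ) - (t:ℂ)) ^ ((α:ℂ) - 1) = (((x - t) ^ (α - 1) : ℝ) : ℂ) := by
      rw [h2, show ((α:ℂ) - 1) = ((α - 1 : ℝ) : ℂ) by push_cast; ring,
        ← Complex.ofReal_cpow (by linarith [ht.2] : (0:ℝ) ≤ x - t)]
    rw [h3, mul_pow]
    ring
  rw [hmain, ← intervalIntegral.integral_of_le hx.le, hJ]
  have hre1 : 0 < ((m:ℂ) + 1).re := by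
    simp only [Complex.add_re, Complex.natCast_re, Complex.one_re]
    positivity
  have hre2 : 0 < ((α:ℂ)).re := by simpa using hα
  have hbeta := Complex.Gamma_mul_Gamma_eq_betaIntegral hre1 hre2
  have hΓm : Complex.Gamma ((m:ℂ) + 1) = (Nat.factorial m : ℂ) :=
    Complex.Gamma_nat_eq_factorial m
  have hΓsum : Complex.Gamma ((m:ℂ) + 1 + (α:ℂ)) = ((Real.Gamma (α + m + 1) : ℝ) : ℂ) := by
    rw [show ((m:ℂ) + 1 + (α:ℂ)) = ((α + m + 1 : ℝ) : ℂ) by push_cast; ring,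
      Complex.Gamma_ofReal]
  have hΓsumne : ((Real.Gamma (α + m + 1) : ℝ) : ℂ) ≠ 0 := by
    exact_mod_cast hΓs.ne'
  have hbeta' : Complex.betaIntegral ((m:ℂ) + 1) (α:ℂ)
      = (Nat.factorial m : ℂ) * ((Real.Gamma α : ℝ) : ℂ) / ((Real.Gamma (α + m + 1) : ℝ) : ℂ) := by
    rw [hΓm, Complex.Gamma_ofReal, hΓsum] at hbeta
    field_simp
    linear_combination -hbeta
  have hxpow : (x:ℂ) ^ ((m:ℂ) + 1 + (α:ℂ) - 1) = ((x ^ (α + m) : ℝ) : ℂ) := by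
    rw [show ((m:ℂ) + 1 + (α:ℂ) - 1) = ((α + m : ℝ) : ℂ) by push_cast; ring,
      ← Complex.ofReal_cpow hx.le]
  rw [hbeta', hxpow]
  push_cast
  field_simp

lemma key_integral {α x : ℝ} (hα : 0 < α) (hx : 0 < x) (l : ℂ) :
    (∫ t in (0:ℝ)..x, (((x - t) ^ (α - 1) : ℝ) : ℂ) * Complex.exp (l * t))
      = ∑' m : ℕ, l ^ m * ((Real.Gamma α * (x ^ (α + m) / Real.Gamma (α + m + 1)) : ℝ) : ℂ) := by
  have hbaseR : IntervalIntegrable (fun t : ℝ => (x - t) ^ (α - 1)) volume 0 x := by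
    have h1 : IntervalIntegrable (fun t : ℝ => t ^ (α - 1)) volume 0 x :=
      intervalIntegral.intervalIntegrable_rpow' (by linarith)
    simpa using (h1.comp_sub_left x).symm
  have hbase : IntervalIntegrable (fun t : ℝ => (((x - t) ^ (α - 1) : ℝ) : ℂ)) volume 0 x := by
    rw [intervalIntegrable_iff] at hbaseR ⊢
    exact hbaseR.ofReal
  have hFint : ∀ m : ℕ, IntervalIntegrable
      (fun t : ℝ => (((x - t) ^ (α - 1) : ℝ) : ℂ) * ((l * t) ^ m / (Nat.factorial m : ℂ)))
      volume 0 x := by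
    intro m
    apply hbase.mul_continuousOn
    apply Continuous.continuousOn
    fun_prop
  have hIoc : ∀ m : ℕ, IntegrableOn
      (fun t : ℝ => (((x - t) ^ (α - 1) : ℝ) : ℂ) * ((l * t) ^ m / (Nat.factorial m : ℂ)))
      (Set.Ioc 0 x) volume :=
    fun m => (intervalIntegrable_iff_integrableOn_Ioc_of_le hx.le).mp (hFint m)
  have hB : (∫ t in (0:ℝ)..x, (x - t) ^ (α - 1)) = x ^ α / α := by
    rw [intervalIntegral.integral_comp_sub_left (fun u : ℝ => u ^ (α - 1)) x]
    simp only [sub_self, sub_zero]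
    rw [integral_rpow (Or.inl (by linarith))]
    have h2 : α - 1 + 1 = α := by ring
    rw [h2, Real.zero_rpow hα.ne']
    ring
  have hbound : ∀ m : ℕ,
      (∫ t in Set.Ioc (0:ℝ) x,
        ‖(((x - t) ^ (α - 1) : ℝ) : ℂ) * ((l * t) ^ m / (Nat.factorial m : ℂ))‖)
        ≤ (x ^ α / α) * ((‖l‖ * x) ^ m / (Nat.factorial m : ℝ)) := by
    intro m
    have hle : ∀ t ∈ Set.Ioc (0:ℝ) x,
        ‖(((x - t) ^ (α - 1) : ℝ) : ℂ) * ((l * t) ^ m / (Nat.factorial m : ℂ))‖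
          ≤ (x - t) ^ (α - 1) * ((‖l‖ * x) ^ m / (Nat.factorial m : ℝ)) := by
      intro t ht
      have hxt : (0:ℝ) ≤ x - t := by linarith [ht.2]
      rw [norm_mul, norm_div, norm_pow]
      have h1 : ‖(((x - t) ^ (α - 1) : ℝ) : ℂ)‖ = (x - t) ^ (α - 1) := by
        rw [Complex.norm_real, Real.norm_of_nonneg (Real.rpow_nonneg hxt _)]
      have h2 : ‖((Nat.factorial m : ℂ))‖ = (Nat.factorial m : ℝ) := by
        simp
      have h3 : ‖l * (t:ℂ)‖ ≤ ‖l‖ * x := by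
        rw [norm_mul, Complex.norm_real, Real.norm_of_nonneg ht.1.le]
        gcongr
        exact ht.2
      rw [h1, h2]
      gcongr
    have hint2 : IntegrableOn
        (fun t : ℝ => (x - t) ^ (α - 1) * ((‖l‖ * x) ^ m / (Nat.factorial m : ℝ)))
        (Set.Ioc 0 x) volume :=
      ((intervalIntegrable_iff_integrableOn_Ioc_of_le hx.le).mp hbaseR).mul_const _
    calc (∫ t in Set.Ioc (0:ℝ) x,
          ‖(((x - t) ^ (α - 1) : ℝ) : ℂ) * ((l * t) ^ m / (Nat.factorial m : ℂ))‖)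
        ≤ ∫ t in Set.Ioc (0:ℝ) x,
            (x - t) ^ (α - 1) * ((‖l‖ * x) ^ m / (Nat.factorial m : ℝ)) :=
          setIntegral_mono_on ((hIoc m).norm) hint2 measurableSet_Ioc hle
      _ = (x ^ α / α) * ((‖l‖ * x) ^ m / (Nat.factorial m : ℝ)) := by
          rw [integral_mul_const, ← intervalIntegral.integral_of_le hx.le, hB]
  have hsum : Summable (fun m : ℕ => ∫ t in Set.Ioc (0:ℝ) x,
      ‖(((x - t) ^ (α - 1) : ℝ) : ℂ) * ((l * t) ^ m / (Nat.factorial m : ℂ))‖) :=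
    Summable.of_nonneg_of_le (fun m => integral_nonneg (fun t => norm_nonneg _)) hbound
      ((Real.summable_pow_div_factorial (‖l‖ * x)).mul_left (x ^ α / α))
  have hexp : ∀ t : ℝ, (((x - t) ^ (α - 1) : ℝ) : ℂ) * Complex.exp (l * t)
      = ∑' m : ℕ, (((x - t) ^ (α - 1) : ℝ) : ℂ) * ((l * t) ^ m / (Nat.factorial m : ℂ)) := by
    intro t
    rw [tsum_mul_left]
    congr 1
    rw [Complex.exp_eq_exp_ℂ, NormedSpace.exp_eq_tsum_div]
  rw [intervalIntegral.integral_of_le hx.le]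
  calc (∫ t in Set.Ioc (0:ℝ) x, (((x - t) ^ (α - 1) : ℝ) : ℂ) * Complex.exp (l * t))
      = ∫ t in Set.Ioc (0:ℝ) x,
          ∑' m : ℕ, (((x - t) ^ (α - 1) : ℝ) : ℂ) * ((l * t) ^ m / (Nat.factorial m : ℂ)) :=
        integral_congr_ae (Filter.Eventually.of_forall fun t => hexp t)
    _ = ∑' m : ℕ, ∫ t in Set.Ioc (0:ℝ) x,
          (((x - t) ^ (α - 1) : ℝ) : ℂ) * ((l * t) ^ m / (Nat.factorial m : ℂ)) :=
        (integral_tsum_of_summable_integral_norm hIoc hsum).symm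
    _ = ∑' m : ℕ, l ^ m * ((Real.Gamma α * (x ^ (α + m) / Real.Gamma (α + m + 1)) : ℝ) : ℂ) :=
        tsum_congr fun m => per_m hα hx l m

noncomputable def mlF (n : ℕ) (x : ℝ) (ρ : ℂ) (k : ℕ) : ℂ :=
  ρ ^ k * ((x ^ (((k : ℝ) + 1) / (n : ℝ) - 1) : ℝ) : ℂ) /
    ((Real.Gamma (((k : ℝ) + 1) / (n : ℝ)) : ℝ) : ℂ)

lemma mlF_eq (n : ℕ) (hn : 1 ≤ n) (x : ℝ) (ρ : ℂ) (s j : ℕ) :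
    mlF n x ρ (j * n + s) = ρ ^ s * (ρ ^ n) ^ j *
      ((x ^ (((s:ℝ)+1)/(n:ℝ) + j - 1) : ℝ) : ℂ) /
      ((Real.Gamma (((s:ℝ)+1)/(n:ℝ) + j) : ℝ) : ℂ) := by
  have hn0 : (n:ℝ) ≠ 0 := Nat.cast_ne_zero.mpr (by omega)
  have he : ((((j * n + s : ℕ)) : ℝ) + 1) / (n : ℝ) = ((s:ℝ)+1)/(n:ℝ) + j := by
    push_cast
    field_simp
    ring
  rw [mlF, he, pow_add, pow_mul']
  ring

lemma mlF_norm (n : ℕ) (hn : 1 ≤ n) (x : ℝ) (hx : 0 < x) (ρ : ℂ) (s j : ℕ) :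
    ‖mlF n x ρ (j * n + s)‖ = (‖ρ‖ ^ s * x ^ (((s:ℝ)+1)/(n:ℝ) - 1)) *
      ((‖ρ‖ ^ n * x) ^ j / Real.Gamma (((s:ℝ)+1)/(n:ℝ) + j)) := by
  have hn0 : (0:ℝ) < n := by positivity
  have hα : 0 < ((s:ℝ)+1)/(n:ℝ) := by positivity
  have hΓ := Real.Gamma_pos_of_pos (show (0:ℝ) < ((s:ℝ)+1)/(n:ℝ) + j by positivity)
  rw [mlF_eq n hn x ρ s j, norm_div, norm_mul, norm_mul, norm_pow, norm_pow, norm_pow,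
    Complex.norm_real, Complex.norm_real,
    Real.norm_of_nonneg (Real.rpow_nonneg hx.le _), Real.norm_of_nonneg hΓ.le]
  rw [show ((s:ℝ)+1)/(n:ℝ) + j - 1 = (((s:ℝ)+1)/(n:ℝ) - 1) + (j:ℝ) by ring,
    Real.rpow_add hx, Real.rpow_natCast, mul_pow]
  ring

lemma mlF_slice_summable (n : ℕ) (hn : 1 ≤ n) (x : ℝ) (hx : 0 < x) (ρ : ℂ) (s : ℕ) :
    Summable (fun j : ℕ => ‖mlF n x ρ (j * n + s)‖) := by
  have hn0 : (0:ℝ) < n := by positivity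
  have hα : 0 < ((s:ℝ)+1)/(n:ℝ) := by positivity
  have hsum := (summable_pow_div_gamma hα (‖ρ‖^n * x) (by positivity)).mul_left
    (‖ρ‖ ^ s * x ^ (((s:ℝ)+1)/(n:ℝ) - 1))
  exact hsum.congr fun j => (mlF_norm n hn x hx ρ s j).symm

lemma mlF_summable (n : ℕ) (hn : 1 ≤ n) (x : ℝ) (hx : 0 < x) (ρ : ℂ) :
    Summable (mlF n x ρ) := by
  haveI : NeZero n := ⟨by omega⟩
  apply Summable.of_norm
  rw [← Equiv.summable_iff (Nat.divModEquiv n).symm]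
  have key : Summable (fun p : ℕ × Fin n => ‖mlF n x ρ (p.1 * n + ↑p.2)‖) := by
    apply (summable_prod_of_nonneg (fun p => norm_nonneg _)).mpr
    constructor
    · intro q
      exact Summable.of_finite
    · apply Summable.congr (f := fun q : ℕ => ∑ r : Fin n, ‖mlF n x ρ (q * n + ↑r)‖)
      · exact summable_sum fun r _ => mlF_slice_summable n hn x hx ρ ↑r
      · intro q
        exact (tsum_fintype _).symm
  exact key.congr fun p => by simp [Nat.divModEquiv, Function.comp]

lemma slice_inj (n : ℕ) (hn : 1 ≤ n) (s : ℕ) :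
    Function.Injective (fun j : ℕ => j * n + s) := by
  intro a b hab
  simp only at hab
  have : a * n = b * n := by omega
  exact Nat.eq_of_mul_eq_mul_right (by omega) this

lemma mlF_tsum (n : ℕ) (hn : 1 ≤ n) (x : ℝ) (hx : 0 < x) (ρ : ℂ) :
    ∑' k, mlF n x ρ k = ∑ s ∈ Finset.range n, ∑' j : ℕ, mlF n x ρ (j * n + s) := by
  haveI : NeZero n := ⟨by omega⟩
  have hS := mlF_summable n hn x hx ρ
  have h1 : ∑' k, mlF n x ρ k = ∑' p : ℕ × Fin n, mlF n x ρ (p.1 * n + ↑p.2) := by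
    rw [← Equiv.tsum_eq (Nat.divModEquiv n).symm (mlF n x ρ)]
    exact tsum_congr fun p => by simp [Nat.divModEquiv]
  have h2 : ∑' p : ℕ × Fin n, mlF n x ρ (p.1 * n + ↑p.2)
      = ∑' q : Fin n × ℕ, mlF n x ρ (q.2 * n + ↑q.1) := by
    rw [← Equiv.tsum_eq (Equiv.prodComm (Fin n) ℕ)
      (fun p : ℕ × Fin n => mlF n x ρ (p.1 * n + ↑p.2))]
    exact tsum_congr fun q => rfl
  have hSq : Summable (fun q : Fin n × ℕ => mlF n x ρ (q.2 * n + ↑q.1)) := by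
    have hinj : Function.Injective (fun q : Fin n × ℕ => q.2 * n + (q.1 : ℕ)) := by
      rintro ⟨r, j⟩ ⟨r', j'⟩ h
      simp only at h
      have h1 := r.isLt
      have h2 := r'.isLt
      have hj : j = j' := by
        by_contra hne
        rcases Nat.lt_or_ge j j' with hlt | hge
        · have : j + 1 ≤ j' := hlt
          have : (j + 1) * n ≤ j' * n := Nat.mul_le_mul_right n this
          have : j * n + n ≤ j' * n := by
            rwa [add_mul, one_mul] at this
          omega
        · have hlt : j' < j := lt_of_le_of_ne hge (Ne.symm hne)
          have : j' + 1 ≤ j := hlt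
          have : (j' + 1) * n ≤ j * n := Nat.mul_le_mul_right n this
          have : j' * n + n ≤ j * n := by
            rwa [add_mul, one_mul] at this
          omega
      subst hj
      have : (r : ℕ) = r' := by omega
      exact Prod.ext (Fin.ext this) rfl
    exact hS.comp_injective hinj
  rw [h1, h2, Summable.tsum_prod' hSq (fun s => hS.comp_injective (slice_inj n hn ↑s)),
    tsum_fintype]
  exact Fin.sum_univ_eq_sum_range (fun s => ∑' j : ℕ, mlF n x ρ (j * n + s)) n

lemma per_s (n : ℕ) (hn : 1 ≤ n) (x : ℝ) (hx : 0 < x) (ρ : ℂ) (s : ℕ) (hs : s < n) :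
    ∑' j : ℕ, mlF n x ρ (j * n + s) =
      ρ ^ s *
        (ρ ^ n *
            (∫ t in (0 : ℝ)..x,
              ((((x - t) ^ (((s : ℝ) + 1) / (n : ℝ) - 1) /
                  Real.Gamma (((s : ℝ) + 1) / (n : ℝ))) : ℝ) : ℂ) *
                Complex.exp (ρ ^ n * t)) +
          (((x ^ (((s : ℝ) + 1) / (n : ℝ) - 1) /
              Real.Gamma (((s : ℝ) + 1) / (n : ℝ))) : ℝ) : ℂ)) := by
  have hn0 : (0:ℝ) < n := by positivity
  set α : ℝ := ((s:ℝ)+1)/(n:ℝ) with hαdef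
  have hα : 0 < α := by positivity
  have hΓα := Real.Gamma_pos_of_pos hα
  have hΓαne : ((Real.Gamma α : ℝ) : ℂ) ≠ 0 := by exact_mod_cast hΓα.ne'
  -- rewrite the integral
  have hint : (∫ t in (0:ℝ)..x,
        (((x - t) ^ (α - 1) / Real.Gamma α : ℝ) : ℂ) * Complex.exp (ρ^n * t))
      = (∫ t in (0:ℝ)..x, (((x - t) ^ (α - 1) : ℝ) : ℂ) * Complex.exp (ρ^n * t))
          / ((Real.Gamma α : ℝ) : ℂ) := by
    rw [← intervalIntegral.integral_div]
    refine intervalIntegral.integral_congr fun t ht => ?_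
    push_cast
    ring
  rw [hint, key_integral hα hx (ρ^n)]
  set S : ℂ := ∑' m : ℕ, (ρ^n) ^ m *
    ((Real.Gamma α * (x ^ (α + m) / Real.Gamma (α + m + 1)) : ℝ) : ℂ) with hSdef
  -- split off the first term
  have hslice : Summable (fun j : ℕ => mlF n x ρ (j * n + s)) :=
    (mlF_summable n hn x hx ρ).comp_injective (slice_inj n hn s)
  rw [Summable.tsum_eq_zero_add hslice]
  have h0 : mlF n x ρ (0 * n + s) = ρ ^ s * ((x ^ (α - 1) : ℝ) : ℂ) / ((Real.Gamma α : ℝ) : ℂ) := by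
    rw [show 0 * n + s = s by ring]
    rfl
  have hterm : ∀ j : ℕ, mlF n x ρ ((j + 1) * n + s)
      = (ρ ^ s * ρ ^ n / ((Real.Gamma α : ℝ) : ℂ)) *
        ((ρ^n) ^ j * ((Real.Gamma α * (x ^ (α + j) / Real.Gamma (α + j + 1)) : ℝ) : ℂ)) := by
    intro j
    rw [mlF_eq n hn x ρ s (j + 1)]
    have hΓj := Real.Gamma_pos_of_pos (show (0:ℝ) < α + j + 1 by positivity)
    have hΓjne : ((Real.Gamma (α + j + 1) : ℝ) : ℂ) ≠ 0 := by exact_mod_cast hΓj.ne'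
    have e1 : α + ((j:ℕ) + 1 : ℕ) - 1 = α + j := by push_cast; ring
    have e2 : α + (((j:ℕ) + 1 : ℕ) : ℝ) = α + j + 1 := by push_cast; ring
    rw [e1, e2]
    push_cast
    rw [pow_succ]
    field_simp
  rw [tsum_congr hterm, tsum_mul_left, ← hSdef, h0]
  push_cast
  field_simp
  ring

theorem stmt_12 (n : ℕ) (hn : 1 ≤ n) (x : ℝ) (hx : 0 < x) (ρ : ℂ) :
    mlH n x ρ =
      ∑ s ∈ Finset.range n,
        ρ ^ s *
          (ρ ^ n *
              (∫ t in (0 : ℝ)..x,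
                ((((x - t) ^ (((s : ℝ) + 1) / (n : ℝ) - 1) /
                    Real.Gamma (((s : ℝ) + 1) / (n : ℝ))) : ℝ) : ℂ) *
                  Complex.exp (ρ ^ n * t)) +
            (((x ^ (((s : ℝ) + 1) / (n : ℝ) - 1) /
                Real.Gamma (((s : ℝ) + 1) / (n : ℝ))) : ℝ) : ℂ)) := by
  have h : mlH n x ρ = ∑' k, mlF n x ρ k := rfl
  rw [h, mlF_tsum n hn x hx ρ]
  exact Finset.sum_congr rfl fun s hs => per_s n hn x hx ρ s (Finset.mem_range.mp hs)
end
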